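/- arXiv:1309.7386 — 5 statements merged into one kernel-verified Lean document; each statement's English description precedes it below -/
import Mathlib

section
/- Fix an integer base g ≥ 2, a real ε > 0, and an integer k ≥ 1. Then there exist δ < 1 and x_0 such that for all real x > x_0, the number of positive integers n ≤ x that are not (ε,k)-normal is less than x^δ. -/
open Filter

noncomputable def plog (x : ℝ) : ℝ := max 1 (Real.log x)

noncomputable def countIn (E : Set ℕ) (x : ℝ) : ℕ :=
  {n : ℕ | 0 < n ∧ (n : ℝ) ≤ x ∧ n ∈ E}.ncard

def Meager (E : Set ℕ) : Prop :=
  ∃ δ : ℝ, δ < 1 ∧ ∃ x₀ : ℝ, ∀ x : ℝ, x > x₀ → (countIn E x : ℝ) < x ^ δ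

def Thin (E : Set ℕ) : Prop :=
  ∃ θ : ℝ, 0 < θ ∧ ∃ x₀ : ℝ, ∀ x : ℝ, x > x₀ → (countIn E x : ℝ) < x / Real.exp (plog x ^ θ)

def DensityZero (S : Set ℕ) : Prop :=
  Filter.Tendsto (fun x : ℝ => (countIn S x : ℝ) / x) Filter.atTop (nhds 0)

/-- The infinite digit sequence obtained by concatenating the base-`g` digit strings
(least significant digit first) of `f 1`, `f 2`, `f 3`, …. Correct whenever each `f m ≥ 1`
(so each digit block is nonempty). -/
def digitSeq (g : ℕ) (f : ℕ → ℕ) (j : ℕ) : ℕ :=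
  ((List.range (j + 1)).flatMap (fun i => Nat.digits g (f (i + 1)))).getD j 0

/-- Number of occurrences of the word `w` among the first `N` digits of the sequence `D`. -/
noncomputable def occCount (D : ℕ → ℕ) (w : List ℕ) (N : ℕ) : ℕ :=
  {j : ℕ | j + w.length ≤ N ∧ ∀ i < w.length, D (j + i) = w.getD i 0}.ncard

/-- The digit sequence `D` is normal in base `g`. -/
def IsNormal (g : ℕ) (D : ℕ → ℕ) : Prop :=
  ∀ w : List ℕ, w ≠ [] → (∀ d ∈ w, d < g) →
    Filter.Tendsto (fun N : ℕ => (occCount D w N : ℝ) / N)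
      Filter.atTop (nhds (((g : ℝ) ^ w.length)⁻¹))

/-- Carmichael's lambda function: the exponent of the unit group of `ℤ/nℤ`. -/
noncomputable def carmichael (n : ℕ) : ℕ := Monoid.exponent (ZMod n)ˣ

/-- The sum-of-divisors function `σ`. -/
def sigma1 (n : ℕ) : ℕ := ∑ d ∈ n.divisors, d

/-- `Ω n`: the number of prime factors of `n` counted with multiplicity. -/
def BigOmega (n : ℕ) : ℕ := (Nat.primeFactorsList n).length

/-- Composition of a list of arithmetic functions. -/
def composeList (l : List (ℕ → ℕ)) : ℕ → ℕ := l.foldr (· ∘ ·) id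

/-- `ν g n w`: the number of occurrences of the word `w` in the base-`g` digit string of `n`. -/
noncomputable def nu (g n : ℕ) (w : List ℕ) : ℕ :=
  {j : ℕ | j + w.length ≤ (Nat.digits g n).length ∧
    ∀ i < w.length, (Nat.digits g n).getD (j + i) 0 = w.getD i 0}.ncard

/-- `n` is `(ε, k)`-normal in base `g`. -/
def EpsKNormal (g : ℕ) (ε : ℝ) (k : ℕ) (n : ℕ) : Prop :=
  ∀ w : List ℕ, w.length = k → (∀ d ∈ w, d < g) →
    (((g : ℝ) ^ k)⁻¹ - ε) * (Nat.digits g n).length < nu g n w ∧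
    (nu g n w : ℝ) < (((g : ℝ) ^ k)⁻¹ + ε) * (Nat.digits g n).length

/-!
Write `ν(n; w)` as the number of positions `j ≤ L - k` with `⌊n / g^j⌋ ≡ s (mod g^k)`, where `s`
is the value of `w`. Apart from at most `k` positions at the top, these positions fall into `k`
residue classes mod `k`, and along the class of `r` the windows are the base-`g^k` digits
("blocks") of `⌊n / g^r⌋`, which do not overlap. So if `n` is not `(ε, k)`-normal, some block
value is too frequent or too rare among the `m ≈ L / k` blocks of some class. An integer below
`g^L` is determined by these blocks and its `L - mk` remaining digits, so such integers number at
most `g^(L - mk)` times the number of words of length `m` over an alphabet of size `G = g^k` in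
which one letter has a deviating frequency, and the exponential-moment (Chernoff) bound makes the
latter at most `(G ρ)^m` with `ρ < 1`. Hence at most `C (g^L)^a` integers with `L` digits are bad,
for some `a < 1`, and summing over `L ≤ log_g x` gives `O(x^a)`.
-/

open Finset

namespace Nat

lemma mod_pow_eq_mod_pow_iff {G a b : ℕ} (hG : 0 < G) (m : ℕ) :
    a % G ^ m = b % G ^ m ↔ ∀ i < m, a / G ^ i % G = b / G ^ i % G := by
  induction m with
  | zero => simp [Nat.mod_one]
  | succ m ih =>
    have hlt : ∀ c : ℕ, c % G ^ m < G ^ m := fun c => Nat.mod_lt _ (by positivity)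
    rw [Nat.mod_pow_succ, Nat.mod_pow_succ, Nat.forall_lt_succ_right, ← ih]
    constructor
    · intro h
      have h₁ := congrArg (· % G ^ m) h
      have h₂ := congrArg (· / G ^ m) h
      simp only [Nat.add_mul_mod_self_left, Nat.mod_mod] at h₁
      simp only [Nat.add_mul_div_left _ _ (by positivity : 0 < G ^ m),
        Nat.div_eq_of_lt (hlt _), zero_add] at h₂
      exact ⟨h₁, h₂⟩
    · rintro ⟨h₁, h₂⟩
      rw [h₁, h₂]

lemma ofDigits_div_pow_mod {g : ℕ} {w : List ℕ} (hw : ∀ d ∈ w, d < g) (i : ℕ) :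
    ofDigits g w / g ^ i % g = w.getD i 0 := by
  induction w generalizing i with
  | nil => simp
  | cons d t ih =>
    have hd : d < g := hw d List.mem_cons_self
    have hg : 0 < g := by omega
    rcases i with _ | i
    · simp [ofDigits_cons, Nat.add_mul_mod_self_left, Nat.mod_eq_of_lt hd]
    · rw [ofDigits_cons, pow_succ', ← Nat.div_div_eq_div_mul, Nat.add_mul_div_left _ _ hg,
        Nat.div_eq_of_lt hd, zero_add, List.getD_cons_succ]
      exact ih (fun x hx => hw x (List.mem_cons_of_mem d hx)) i

lemma getD_digits_eq_iff_mod_pow {g : ℕ} (hg : 2 ≤ g) {w : List ℕ} (hw : ∀ d ∈ w, d < g)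
    (n j : ℕ) :
    (∀ i < w.length, (digits g n).getD (j + i) 0 = w.getD i 0) ↔
      n / g ^ j % g ^ w.length = ofDigits g w := by
  rw [← Nat.mod_eq_of_lt (ofDigits_lt_base_pow_length (by omega) hw),
    mod_pow_eq_mod_pow_iff (by omega)]
  simp only [getD_digits _ _ hg, ofDigits_div_pow_mod hw, pow_add, Nat.div_div_eq_div_mul]

lemma sum_card_filter_add_mul_eq_count (p : ℕ → Prop) [DecidablePred p] (k m : ℕ) :
    ∑ r : Fin k, #{i : Fin m | p (r + i * k)} = count p (m * k) := by
  simp only [card_filter, count_eq_card_filter_range]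
  rw [Finset.sum_comm, ← Fintype.sum_prod_type', ← Fin.sum_univ_eq_sum_range,
    ← finProdFinEquiv.sum_comp]
  simp [finProdFinEquiv_apply_val, mul_comm]

end Nat

lemma nu_eq_count {g : ℕ} (hg : 2 ≤ g) {w : List ℕ} (hw : ∀ d ∈ w, d < g) (n : ℕ) :
    nu g n w = Nat.count (fun j => n / g ^ j % g ^ w.length = Nat.ofDigits g w)
      ((Nat.digits g n).length + 1 - w.length) := by
  rw [nu, Nat.count_eq_card_filter_range, ← Set.ncard_coe_finset]
  congr 1
  ext j
  simp only [Nat.getD_digits_eq_iff_mod_pow hg hw, coe_filter, mem_range, Set.mem_ofPred_eq]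
  omega

lemma exists_one_lt_add_lt_mul_rpow {a G q : ℝ} (h : a < q * G) :
    ∃ y > 1, a * y + (G - a) < G * y ^ q := by
  have hd : HasDerivAt (fun y : ℝ => G * y ^ q - (a * y + (G - a)))
      (G * (q * 1 ^ (q - 1)) - a) 1 :=
    ((Real.hasDerivAt_rpow_const (Or.inl one_ne_zero)).const_mul G).sub
      (((hasDerivAt_id 1).const_mul a).add_const _ |>.congr_deriv (mul_one a))
  have hpos : 0 < G * (q * 1 ^ (q - 1)) - a := by rw [Real.one_rpow]; linarith
  obtain ⟨t, ht, ht0 : 0 < t⟩ := ((hd.tendsto_slope_zero_right.eventually (lt_mem_nhds hpos)).and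
    self_mem_nhdsWithin).exists
  refine ⟨1 + t, by linarith, ?_⟩
  have := (smul_pos_iff_of_pos_left (inv_pos.2 ht0)).1 ht
  simp only [Real.one_rpow] at this
  linarith

lemma sum_pow_card_filter (G m : ℕ) (p : ℕ → Prop) [DecidablePred p] (y : ℝ) :
    ∑ b ∈ Fintype.piFinset (fun _ : Fin m => range G), y ^ #{i | p (b i)} =
      (∑ d ∈ range G, if p d then y else 1) ^ m := by
  rw [← Fin.prod_const, prod_univ_sum]
  refine sum_congr rfl fun b _ => ?_
  rw [prod_ite, prod_const, prod_const_one, mul_one]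

lemma card_filter_mul_rpow_le {G m : ℕ} (p : ℕ → Prop) [DecidablePred p] {y : ℝ} (hy : 1 ≤ y)
    (c : ℝ) :
    #{b ∈ Fintype.piFinset (fun _ : Fin m => range G) | c ≤ #{i | p (b i)}} * y ^ c ≤
      (∑ d ∈ range G, if p d then y else 1) ^ m := by
  rw [← sum_pow_card_filter, ← nsmul_eq_mul, ← sum_const]
  refine (sum_le_sum fun b hb => ?_).trans
    (sum_le_sum_of_subset_of_nonneg (filter_subset _ _) fun _ _ _ => by positivity)
  rw [← Real.rpow_natCast]
  exact Real.rpow_le_rpow_of_exponent_le hy (mem_filter.1 hb).2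

lemma sum_range_ite_eq (G : ℕ) (p : ℕ → Prop) [DecidablePred p] (y : ℝ) :
    ∑ d ∈ range G, (if p d then y else 1) =
      #{d ∈ range G | p d} * y + (G - #{d ∈ range G | p d}) := by
  have hnot : (#{d ∈ range G | ¬p d} : ℝ) = G - #{d ∈ range G | p d} := by
    rw [eq_sub_iff_add_eq', ← Nat.cast_add, card_filter_add_card_filter_not, card_range]
  rw [sum_ite, sum_const, sum_const, nsmul_eq_mul, nsmul_one, hnot]

lemma exists_card_filter_le_pow {G a : ℕ} {q : ℝ} (ha : a ≤ G) (hq : a < q * G) :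
    ∃ ρ, 0 ≤ ρ ∧ ρ < 1 ∧ ∀ (p : ℕ → Prop) [DecidablePred p], #{d ∈ range G | p d} = a →
      ∀ m : ℕ, (#{b ∈ Fintype.piFinset (fun _ : Fin m => range G) | q * m ≤ #{i | p (b i)}} : ℝ)
        ≤ (G * ρ) ^ m := by
  obtain ⟨y, hy, hyq⟩ := exists_one_lt_add_lt_mul_rpow hq
  have haG : (a : ℝ) ≤ G := by exact_mod_cast ha
  have hG : (0 : ℝ) < G := Nat.cast_pos.2 <| Nat.pos_of_ne_zero fun h => by
    rw [h, Nat.cast_zero, mul_zero] at hq; exact (Nat.cast_nonneg a).not_gt hq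
  have hyq0 : 0 < y ^ q := by positivity
  -- `ρ` is the exponential moment `E[y^X] / y^q` of a single letter, `X` the indicator of `p`.
  refine ⟨(a * y + (G - a)) / (G * y ^ q), by positivity, (div_lt_one (by positivity)).2 hyq,
    fun p _ hp m => ?_⟩
  have := card_filter_mul_rpow_le (G := G) (m := m) p hy.le (q * m)
  rw [sum_range_ite_eq, hp, Real.rpow_mul_natCast (by positivity)] at this
  refine le_of_mul_le_mul_right (this.trans_eq ?_) (pow_pos hyq0 m)
  rw [← mul_pow]
  congr 1
  field_simp

lemma exists_card_tails_le_pow {G : ℕ} (hG : 0 < G) {η : ℝ} (hη : 0 < η) :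
    ∃ ρ, 0 < ρ ∧ ρ < 1 ∧ ∀ m : ℕ, ∀ s < G,
      (#{b ∈ Fintype.piFinset (fun _ : Fin m => range G) |
        ((G : ℝ)⁻¹ + η) * m ≤ #{i | b i = s}} : ℝ) ≤ (G * ρ) ^ m ∧
      (#{b ∈ Fintype.piFinset (fun _ : Fin m => range G) |
        (1 - (G : ℝ)⁻¹ + η) * m ≤ #{i | b i ≠ s}} : ℝ) ≤ (G * ρ) ^ m := by
  have hG' : (0 : ℝ) < G := by exact_mod_cast hG
  have hGinv : (G : ℝ)⁻¹ * G = 1 := inv_mul_cancel₀ hG'.ne'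
  obtain ⟨ρ₁, hρ₁, hρ₁1, hfreq⟩ := exists_card_filter_le_pow (G := G) (a := 1)
    (q := (G : ℝ)⁻¹ + η) hG (by push_cast; nlinarith)
  obtain ⟨ρ₂, hρ₂, hρ₂1, hrare⟩ := exists_card_filter_le_pow (G := G) (a := G - 1)
    (q := 1 - (G : ℝ)⁻¹ + η) (Nat.sub_le _ _) (by rw [Nat.cast_sub hG, Nat.cast_one]; nlinarith)
  refine ⟨max (max ρ₁ ρ₂) (1 / 2), lt_max_of_lt_right (by norm_num),
    max_lt (max_lt hρ₁1 hρ₂1) (by norm_num), fun m s hs => ⟨?_, ?_⟩⟩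
  · refine (hfreq (· = s) ?_ m).trans (by gcongr; exact (le_max_left _ _).trans (le_max_left _ _))
    rw [filter_eq', if_pos (mem_range.2 hs), card_singleton]
  · refine (hrare (· ≠ s) ?_ m).trans (by gcongr; exact (le_max_right _ _).trans (le_max_left _ _))
    rw [filter_ne', card_erase_of_mem (mem_range.2 hs), card_range]

/-- The base-`g^k` digits of `⌊n / g^r⌋`, i.e. the windows of `k` base-`g` digits of `n` starting
at the positions `r + i k`. -/
def blocks (g k r m n : ℕ) : Fin m → ℕ := fun i => n / g ^ (r + i * k) % g ^ k

lemma card_filter_blocks_le {g k r m L : ℕ} (hg : 0 < g) (hL : r + m * k ≤ L)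
    (p : (Fin m → ℕ) → Prop) [DecidablePred p] :
    #{n ∈ range (g ^ L) | p (blocks g k r m n)} ≤
      #{b ∈ Fintype.piFinset fun _ : Fin m => range (g ^ k) | p b} * g ^ (L - m * k) := by
  have hsplit : ∀ n, n = n % g ^ r + g ^ r * (n / g ^ r % (g ^ k) ^ m +
      (g ^ k) ^ m * (n / g ^ (r + m * k))) := fun n => by
    rw [pow_add, ← pow_mul, mul_comm k m, ← Nat.div_div_eq_div_mul, Nat.mod_add_div,
      Nat.mod_add_div]
  calc _ ≤ #({b ∈ Fintype.piFinset fun _ : Fin m => range (g ^ k) | p b} ×ˢ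
        (range (g ^ r) ×ˢ range (g ^ (L - (r + m * k))))) := by
        refine card_le_card_of_injOn (fun n => (blocks g k r m n, n % g ^ r, n / g ^ (r + m * k)))
          (fun n hn => ?_) (fun n _ n' _ hnn' => ?_)
        · simp only [coe_filter, mem_range, Set.mem_ofPred_eq] at hn
          simp only [coe_product, coe_filter, Set.mem_prod, Set.mem_ofPred_eq,
            Fintype.mem_piFinset, mem_range, coe_range, Set.mem_Iio]
          refine ⟨⟨fun i => Nat.mod_lt _ (by positivity), hn.2⟩, Nat.mod_lt _ (by positivity), ?_⟩
          rw [Nat.div_lt_iff_lt_mul (by positivity), ← pow_add, Nat.sub_add_cancel hL]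
          exact hn.1
        · simp only [Prod.mk.injEq] at hnn'
          obtain ⟨hb, hlo, hhi⟩ := hnn'
          have hmid : n / g ^ r % (g ^ k) ^ m = n' / g ^ r % (g ^ k) ^ m := by
            refine (Nat.mod_pow_eq_mod_pow_iff (by positivity) m).2 fun i hi => ?_
            have := congrFun hb ⟨i, hi⟩
            simpa only [blocks, Nat.div_div_eq_div_mul, ← pow_mul, ← pow_add, mul_comm k i]
              using this
          rw [hsplit n, hsplit n', hlo, hmid, hhi]
    _ = _ := by
        rw [card_product, card_product, card_range, card_range, ← pow_add]
        congr 2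
        omega

lemma card_filter_blocks_freq_le {g k r m L : ℕ} (hg : 0 < g) (hL : r + m * k ≤ L)
    {p : ℕ → Prop} [DecidablePred p] {q ρ : ℝ}
    (hρ : (#{b ∈ Fintype.piFinset (fun _ : Fin m => range (g ^ k)) | q * m ≤ #{i | p (b i)}} : ℝ)
      ≤ (g ^ k * ρ) ^ m) :
    (#{n ∈ range (g ^ L) | q * m ≤ #{i | p (blocks g k r m n i)}} : ℝ) ≤ ρ ^ m * g ^ L := by
  have h := card_filter_blocks_le hg hL (fun b => q * m ≤ #{i | p (b i)})
  calc _ ≤ (#{b ∈ Fintype.piFinset (fun _ : Fin m => range (g ^ k)) | q * m ≤ #{i | p (b i)}} : ℝ)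
        * g ^ (L - m * k) := by exact_mod_cast h
    _ ≤ (g ^ k * ρ) ^ m * g ^ (L - m * k) := by gcongr
    _ = ρ ^ m * g ^ L := by
        rw [mul_pow, ← pow_mul, mul_comm, ← mul_assoc, ← pow_add, mul_comm,
          show L - m * k + k * m = L by rw [mul_comm k]; omega]

lemma exists_deviation_of_sum_deviation {k m L ν : ℕ} (hk : 0 < k) (c : Fin k → ℕ)
    (hmL : (m + 1) * k ≤ L) (hLm : L < (m + 2) * k) (hlo : ∑ r, c r ≤ ν)
    (hhi : ν ≤ ∑ r, c r + k) {P ε ε₀ : ℝ} (hP : P ≤ 1) (hε₀ε : ε₀ ≤ ε) (hε₀P : ε₀ ≤ P)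
    (hm : 4 ≤ ε₀ * m) (hν : ν ≤ (P - ε) * L ∨ (P + ε) * L ≤ ν) :
    ∃ r, (P + ε₀ / 2) * m ≤ c r ∨ (c r : ℝ) ≤ (P - ε₀ / 2) * m := by
  have hLlo : ((m : ℝ) + 1) * k ≤ L := by exact_mod_cast hmL
  have hLhi : (L : ℝ) ≤ ((m : ℝ) + 2) * k := by exact_mod_cast hLm.le
  have hlo' : ∑ r, (c r : ℝ) ≤ ν := by exact_mod_cast hlo
  have hhi' : (ν : ℝ) ≤ ∑ r, (c r : ℝ) + k := by exact_mod_cast hhi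
  have hne : (univ : Finset (Fin k)).Nonempty := univ_nonempty_iff.mpr ⟨⟨0, hk⟩⟩
  have hk' : (0 : ℝ) ≤ k := k.cast_nonneg
  have hL : (0 : ℝ) ≤ L := L.cast_nonneg
  have hε₀ : 0 < ε₀ := by nlinarith [(m.cast_nonneg : (0 : ℝ) ≤ m)]
  rcases hν with hν | hν
  · obtain ⟨r, -, hr⟩ := exists_le_of_sum_le (f := fun r => (c r : ℝ))
      (g := fun _ => (P - ε₀ / 2) * m) hne <| by
        rw [sum_const, card_univ, Fintype.card_fin, nsmul_eq_mul]
        calc ∑ r, (c r : ℝ) ≤ (P - ε) * L := hlo'.trans hν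
          _ ≤ (P - ε₀) * L := by gcongr
          _ ≤ (P - ε₀) * ((m + 2) * k) := by gcongr
          _ ≤ k * ((P - ε₀ / 2) * m) := by nlinarith [mul_nonneg hk' hε₀.le]
    exact ⟨r, Or.inr hr⟩
  · obtain ⟨r, -, hr⟩ := exists_le_of_sum_le (f := fun _ => (P + ε₀ / 2) * m)
      (g := fun r => (c r : ℝ)) hne <| by
        rw [sum_const, card_univ, Fintype.card_fin, nsmul_eq_mul]
        calc k * ((P + ε₀ / 2) * m) ≤ (P + ε₀) * ((m + 1) * k) - k := by nlinarith
          _ ≤ (P + ε) * L - k := by gcongr; linarith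
          _ ≤ ∑ r, (c r : ℝ) := by linarith
    exact ⟨r, Or.inl hr⟩

lemma exists_block_deviation {g k m n : ℕ} (hg : 2 ≤ g) (hk : 0 < k) {ε ε₀ : ℝ}
    (hε₀ε : ε₀ ≤ ε) (hε₀ : ε₀ ≤ ((g : ℝ) ^ k)⁻¹) (hm : 4 ≤ ε₀ * m)
    (hmL : (m + 1) * k ≤ (Nat.digits g n).length) (hLm : (Nat.digits g n).length < (m + 2) * k)
    (hn : ¬ EpsKNormal g ε k n) :
    ∃ r : Fin k, ∃ s < g ^ k,
      (((g : ℝ) ^ k)⁻¹ + ε₀ / 2) * m ≤ #{i | blocks g k r m n i = s} ∨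
      (#{i | blocks g k r m n i = s} : ℝ) ≤ (((g : ℝ) ^ k)⁻¹ - ε₀ / 2) * m := by
  simp only [EpsKNormal, not_forall, not_and_or, not_lt] at hn
  obtain ⟨w, rfl, hw, hdev⟩ := hn
  have hsum : ∑ r : Fin w.length, #{i | blocks g w.length r m n i = Nat.ofDigits g w} =
      Nat.count (fun j => n / g ^ j % g ^ w.length = Nat.ofDigits g w) (m * w.length) :=
    Nat.sum_card_filter_add_mul_eq_count (fun j => n / g ^ j % g ^ w.length = Nat.ofDigits g w) _ _
  have hlo : ∑ r : Fin w.length, #{i | blocks g w.length r m n i = Nat.ofDigits g w} ≤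
      nu g n w := by
    rw [hsum, nu_eq_count hg hw]
    exact Nat.count_monotone _ (by rw [add_mul] at hmL; omega)
  have hhi : nu g n w ≤
      ∑ r : Fin w.length, #{i | blocks g w.length r m n i = Nat.ofDigits g w} + w.length := by
    rw [hsum, nu_eq_count hg hw]
    calc _ ≤ Nat.count _ (m * w.length + w.length) :=
          Nat.count_monotone _ (by rw [add_mul] at hLm; omega)
      _ ≤ _ := by rw [Nat.count_add]; exact Nat.add_le_add_left (Nat.count_le _) _
  have hP : ((g : ℝ) ^ w.length)⁻¹ ≤ 1 :=
    inv_le_one_of_one_le₀ (one_le_pow₀ (by exact_mod_cast (by omega : 1 ≤ g)))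
  obtain ⟨r, hr⟩ := exists_deviation_of_sum_deviation hk
    (fun r => #{i | blocks g w.length r m n i = Nat.ofDigits g w}) hmL hLm hlo hhi hP hε₀ε hε₀ hm
    hdev
  exact ⟨r, Nat.ofDigits g w, Nat.ofDigits_lt_base_pow_length (by omega) hw, hr⟩

lemma ncard_not_epsKNormal_length_le {g k L m : ℕ} (hg : 2 ≤ g) (hk : 0 < k) {ε ε₀ ρ : ℝ}
    (hε₀ε : ε₀ ≤ ε) (hε₀ : ε₀ ≤ ((g : ℝ) ^ k)⁻¹) (hm : 4 ≤ ε₀ * m)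
    (hmL : (m + 1) * k ≤ L) (hLm : L < (m + 2) * k)
    (htail : ∀ s < g ^ k,
      (#{b ∈ Fintype.piFinset (fun _ : Fin m => range (g ^ k)) |
        (((g : ℝ) ^ k)⁻¹ + ε₀ / 2) * m ≤ #{i | b i = s}} : ℝ) ≤ (g ^ k * ρ) ^ m ∧
      (#{b ∈ Fintype.piFinset (fun _ : Fin m => range (g ^ k)) |
        (1 - ((g : ℝ) ^ k)⁻¹ + ε₀ / 2) * m ≤ #{i | b i ≠ s}} : ℝ) ≤ (g ^ k * ρ) ^ m) :
    ({n | n < g ^ L ∧ (Nat.digits g n).length = L ∧ ¬ EpsKNormal g ε k n}.ncard : ℝ) ≤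
      2 * k * g ^ k * ρ ^ m * g ^ L := by
  let U : Fin k → ℕ → Finset ℕ := fun r s => {n ∈ range (g ^ L) |
    (((g : ℝ) ^ k)⁻¹ + ε₀ / 2) * m ≤ #{i | blocks g k r m n i = s}}
  let V : Fin k → ℕ → Finset ℕ := fun r s => {n ∈ range (g ^ L) |
    (1 - ((g : ℝ) ^ k)⁻¹ + ε₀ / 2) * m ≤ #{i | blocks g k r m n i ≠ s}}
  have hsub : {n | n < g ^ L ∧ (Nat.digits g n).length = L ∧ ¬ EpsKNormal g ε k n} ⊆
      ↑(univ.biUnion fun r => (range (g ^ k)).biUnion fun s => U r s ∪ V r s) := by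
    rintro n ⟨hnL, hlen, hbad⟩
    rw [← mem_range] at hnL
    obtain ⟨r, s, hs, hdev⟩ :=
      exists_block_deviation hg hk hε₀ε hε₀ hm (hlen ▸ hmL) (hlen ▸ hLm) hbad
    simp only [coe_biUnion, coe_univ, Set.mem_univ, coe_range, Set.mem_Iio, coe_union,
      Set.iUnion_true, Set.mem_iUnion, Set.mem_union, mem_coe, exists_prop]
    refine ⟨r, s, hs, hdev.imp (fun h => mem_filter.2 ⟨hnL, h⟩) (fun h => mem_filter.2 ⟨hnL, ?_⟩)⟩
    -- a shortage of the letter `s` is an excess of the other letters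
    have hsplit := card_filter_add_card_filter_not (s := (univ : Finset (Fin m)))
      (fun i => blocks g k r m n i = s)
    rw [card_univ, Fintype.card_fin] at hsplit
    have : (#{i | blocks g k r m n i ≠ s} : ℝ) = m - #{i | blocks g k r m n i = s} := by
      rw [eq_sub_iff_add_eq', ← Nat.cast_add, hsplit]
    rw [this]
    linarith
  have hUV : ∀ r : Fin k, ∀ s < g ^ k, (#(U r s ∪ V r s) : ℝ) ≤ 2 * (ρ ^ m * g ^ L) := by
    intro r s hs
    have hrL : (r : ℕ) + m * k ≤ L := by rw [add_mul] at hmL; have := r.isLt; omega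
    have hU := card_filter_blocks_freq_le (r := r) (p := (· = s)) (by omega) hrL (htail s hs).1
    have hV := card_filter_blocks_freq_le (r := r) (p := (· ≠ s)) (by omega) hrL (htail s hs).2
    calc (#(U r s ∪ V r s) : ℝ) ≤ #(U r s) + #(V r s) := by exact_mod_cast card_union_le _ _
      _ ≤ _ := by linarith
  calc ({n | n < g ^ L ∧ (Nat.digits g n).length = L ∧ ¬ EpsKNormal g ε k n}.ncard : ℝ)
      ≤ ∑ r : Fin k, ∑ s ∈ range (g ^ k), (#(U r s ∪ V r s) : ℝ) := by
        have := Set.ncard_le_ncard hsub (finite_toSet _)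
        rw [Set.ncard_coe_finset] at this
        exact_mod_cast this.trans
          (card_biUnion_le.trans (sum_le_sum fun r _ => card_biUnion_le))
    _ ≤ ∑ r : Fin k, ∑ s ∈ range (g ^ k), 2 * (ρ ^ m * g ^ L) :=
        sum_le_sum fun r _ => sum_le_sum fun s hs => hUV r s (mem_range.1 hs)
    _ = 2 * k * g ^ k * ρ ^ m * g ^ L := by simp; ring

/-- Since `x ^ (log ρ / (k log x)) = ρ ^ (1 / k)`, every `k` digits gain a factor `ρ`. -/
lemma pow_mul_pow_le_rpow {x ρ : ℝ} (hx : 1 < x) (hρ0 : 0 < ρ) (hρ1 : ρ ≤ 1) {k L m : ℕ}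
    (hk : 0 < k) (hL : L ≤ (m + 2) * k) :
    x ^ L * ρ ^ m ≤ ρ⁻¹ ^ 2 * (x ^ L) ^ (1 + Real.log ρ / (k * Real.log x)) := by
  have hlogx : 0 < Real.log x := Real.log_pos hx
  have hlogρ : Real.log ρ ≤ 0 := Real.log_nonpos hρ0.le hρ1
  have hk' : (0 : ℝ) < k := by exact_mod_cast hk
  have hL' : (L : ℝ) ≤ (m + 2) * k := by exact_mod_cast hL
  rw [← Real.log_le_log_iff (by positivity) (by positivity), Real.log_mul (by positivity)
    (by positivity), Real.log_mul (by positivity) (by positivity), Real.log_rpow (by positivity),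
    Real.log_pow, Real.log_pow, Real.log_pow, Real.log_inv]
  have key : L * Real.log ρ ≥ (m + 2) * k * Real.log ρ := mul_le_mul_of_nonpos_right hL' hlogρ
  field_simp
  push_cast
  linarith

lemma ncard_not_epsKNormal_length_le_rpow {g k L m₀ : ℕ} (hg : 2 ≤ g) (hk : 0 < k)
    {ε ε₀ ρ : ℝ} (hε₀ε : ε₀ ≤ ε) (hε₀ : ε₀ ≤ ((g : ℝ) ^ k)⁻¹) (hρ0 : 0 < ρ) (hρ1 : ρ < 1)
    (htail : ∀ m : ℕ, ∀ s < g ^ k,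
      (#{b ∈ Fintype.piFinset (fun _ : Fin m => range (g ^ k)) |
        (((g : ℝ) ^ k)⁻¹ + ε₀ / 2) * m ≤ #{i | b i = s}} : ℝ) ≤ (g ^ k * ρ) ^ m ∧
      (#{b ∈ Fintype.piFinset (fun _ : Fin m => range (g ^ k)) |
        (1 - ((g : ℝ) ^ k)⁻¹ + ε₀ / 2) * m ≤ #{i | b i ≠ s}} : ℝ) ≤ (g ^ k * ρ) ^ m)
    (hm₀ : 4 ≤ ε₀ * m₀) (hL : (m₀ + 1) * k ≤ L) :
    ({n | n < g ^ L ∧ (Nat.digits g n).length = L ∧ ¬ EpsKNormal g ε k n}.ncard : ℝ) ≤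
      2 * k * g ^ k * ρ⁻¹ ^ 2 * ((g : ℝ) ^ L) ^ (1 + Real.log ρ / (k * Real.log g)) := by
  have hm₀L : m₀ + 1 ≤ L / k := (Nat.le_div_iff_mul_le hk).2 hL
  have hmL : (L / k - 1 + 1) * k ≤ L := by
    rw [Nat.sub_add_cancel (by omega)]; exact Nat.div_mul_le_self L k
  have hLm : L < (L / k - 1 + 2) * k := by
    rw [show L / k - 1 + 2 = L / k + 1 by omega, mul_comm]; exact Nat.lt_mul_div_succ L hk
  have hm : 4 ≤ ε₀ * (L / k - 1 : ℕ) := by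
    have hε₀' : 0 ≤ ε₀ := by nlinarith [(m₀.cast_nonneg : (0 : ℝ) ≤ m₀)]
    have : (m₀ : ℝ) ≤ (L / k - 1 : ℕ) := by exact_mod_cast (by omega : m₀ ≤ L / k - 1)
    nlinarith [mul_le_mul_of_nonneg_left this hε₀']
  calc _ ≤ 2 * k * g ^ k * ρ ^ (L / k - 1) * g ^ L :=
        ncard_not_epsKNormal_length_le hg hk hε₀ε hε₀ hm hmL hLm (htail _)
    _ = 2 * k * g ^ k * ((g : ℝ) ^ L * ρ ^ (L / k - 1)) := by ring
    _ ≤ _ := by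
        rw [mul_assoc _ (ρ⁻¹ ^ 2)]
        exact mul_le_mul_of_nonneg_left (pow_mul_pow_le_rpow
          (by exact_mod_cast (by omega : 1 < g)) hρ0 hρ1.le hk hLm.le) (by positivity)

lemma forall_le_mul_rpow_of_le_pow {x C a : ℝ} {L₁ : ℕ} {f : ℕ → ℝ} (hx : 1 ≤ x) (hC : 0 ≤ C)
    (ha : 0 ≤ a) (hf : ∀ L, f L ≤ x ^ L) (hL₁ : ∀ L ≥ L₁, f L ≤ C * (x ^ L) ^ a) (L : ℕ) :
    f L ≤ (C + x ^ L₁) * (x ^ L) ^ a := by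
  have hxL : 1 ≤ x ^ L := one_le_pow₀ hx
  rcases le_or_gt L₁ L with hL | hL
  · exact (hL₁ L hL).trans (by gcongr; exact le_add_of_nonneg_right (by positivity))
  · calc f L ≤ (x ^ L) ^ (1 - a) * (x ^ L) ^ a := by
          rw [← Real.rpow_add (by positivity), sub_add_cancel, Real.rpow_one]; exact hf L
      _ ≤ x ^ L₁ * (x ^ L) ^ a := by
          gcongr
          calc (x ^ L) ^ (1 - a) ≤ (x ^ L) ^ (1 : ℝ) :=
                Real.rpow_le_rpow_of_exponent_le hxL (by linarith)
            _ ≤ x ^ L₁ := by rw [Real.rpow_one]; exact pow_le_pow_right₀ hx hL.le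
      _ ≤ _ := by gcongr; exact le_add_of_nonneg_left hC

lemma exists_ncard_not_epsKNormal_length_le_rpow {g k : ℕ} (hg : 2 ≤ g) (hk : 0 < k) {ε : ℝ}
    (hε : 0 < ε) :
    ∃ C a : ℝ, 0 < a ∧ a < 1 ∧ ∀ L, ({n | n < g ^ L ∧ (Nat.digits g n).length = L ∧
      ¬ EpsKNormal g ε k n}.ncard : ℝ) ≤ C * ((g : ℝ) ^ L) ^ a := by
  set ε₀ := min ε ((g : ℝ) ^ k)⁻¹
  have hε₀ : 0 < ε₀ := lt_min hε (by positivity)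
  obtain ⟨ρ, hρ0, hρ1, htail⟩ := exists_card_tails_le_pow (G := g ^ k) (by positivity)
    (half_pos hε₀)
  rw [Nat.cast_pow] at htail
  have hm₀ : 4 ≤ ε₀ * ⌈4 / ε₀⌉₊ := by
    have := Nat.le_ceil (4 / ε₀)
    rwa [div_le_iff₀ hε₀, mul_comm] at this
  set a₀ := 1 + Real.log ρ / (k * Real.log g)
  have ha₀ : a₀ < 1 := by
    have : Real.log ρ / (k * Real.log g) < 0 := div_neg_of_neg_of_pos (Real.log_neg hρ0 hρ1)
      (mul_pos (by exact_mod_cast hk) (Real.log_pos (by exact_mod_cast hg)))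
    linarith
  have hg1 : (1 : ℝ) ≤ g := by exact_mod_cast (by omega : 1 ≤ g)
  refine ⟨_, max a₀ (1 / 2), by positivity, max_lt ha₀ (by norm_num),
    forall_le_mul_rpow_of_le_pow (L₁ := (⌈4 / ε₀⌉₊ + 1) * k) hg1
      (C := 2 * k * g ^ k * ρ⁻¹ ^ 2) (by positivity) (by positivity) (fun L => ?_) fun L hL => ?_⟩
  · calc _ ≤ ((range (g ^ L) : Set ℕ).ncard : ℝ) := by
          exact_mod_cast Set.ncard_le_ncard (fun n (hn : n < g ^ L ∧ _) => mem_range.2 hn.1)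
            (finite_toSet _)
      _ = _ := by rw [Set.ncard_coe_finset, card_range, Nat.cast_pow]
  · refine (ncard_not_epsKNormal_length_le_rpow hg hk (min_le_left _ _) (min_le_right _ _)
      hρ0 hρ1 htail hm₀ hL).trans ?_
    gcongr
    · exact one_le_pow₀ hg1
    · exact le_max_left _ _

lemma countIn_le_of_ncard_length_le {g : ℕ} (hg : 2 ≤ g) {E : Set ℕ} {C a : ℝ} (ha : 0 < a)
    (h : ∀ L, ({n | n < g ^ L ∧ (Nat.digits g n).length = L ∧ n ∈ E}.ncard : ℝ) ≤
      C * ((g : ℝ) ^ L) ^ a) :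
    ∃ C', ∀ x ≥ 1, (countIn E x : ℝ) ≤ C' * x ^ a := by
  have hC : 0 ≤ C := by simpa using (Nat.cast_nonneg _).trans (h 0)
  have hg' : (1 : ℝ) < g := by exact_mod_cast hg
  set γ := (g : ℝ) ^ a
  have hγ : 1 < γ := Real.one_lt_rpow hg' ha
  refine ⟨C * γ / (γ - 1) * γ, fun x hx => ?_⟩
  set N := (Nat.digits g ⌊x⌋₊).length
  set S : ℕ → Set ℕ := fun L => {n | n < g ^ L ∧ (Nat.digits g n).length = L ∧ n ∈ E}
  have hsub : {n : ℕ | 0 < n ∧ (n : ℝ) ≤ x ∧ n ∈ E} ⊆ ⋃ L ∈ range (N + 1), S L := by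
    rintro n ⟨-, hnx, hnE⟩
    simp only [Set.mem_iUnion, mem_range, exists_prop]
    exact ⟨(Nat.digits g n).length, Nat.lt_succ_of_le (Nat.le_length_digits_le g n _
      (Nat.le_floor hnx)), Nat.lt_base_pow_length_digits (by omega), rfl, hnE⟩
  have hfin : (⋃ L ∈ range (N + 1), S L).Finite :=
    (finite_toSet _).biUnion fun L _ => (Set.finite_lt_nat (g ^ L)).subset fun n hn => hn.1
  have hN : (g : ℝ) ^ N ≤ g * x := by
    have := Nat.base_pow_length_digits_le g ⌊x⌋₊ (by omega) (Nat.floor_pos.2 hx).ne'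
    calc (g : ℝ) ^ N ≤ g * ⌊x⌋₊ := by exact_mod_cast this
      _ ≤ g * x := by gcongr; exact Nat.floor_le (by linarith)
  calc (countIn E x : ℝ) ≤ ∑ L ∈ range (N + 1), ((S L).ncard : ℝ) := by
        exact_mod_cast (Set.ncard_le_ncard hsub hfin).trans (set_ncard_biUnion_le _ _)
    _ ≤ ∑ L ∈ range (N + 1), C * γ ^ L :=
        sum_le_sum fun L _ => (h L).trans_eq (by rw [Real.rpow_pow_comm (by positivity)])
    _ = C * ((γ ^ (N + 1) - 1) / (γ - 1)) := by rw [← mul_sum, geom_sum_eq hγ.ne']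
    _ ≤ C * (γ ^ (N + 1) / (γ - 1)) := by gcongr; linarith
    _ = C * (γ / (γ - 1) * γ ^ N) := by ring
    _ ≤ C * (γ / (γ - 1) * (γ * x ^ a)) := by
        gcongr
        calc γ ^ N = ((g : ℝ) ^ N) ^ a := Real.rpow_pow_comm (by positivity) _ _
          _ ≤ (g * x) ^ a := by gcongr
          _ = γ * x ^ a := Real.mul_rpow (by positivity) (by linarith)
    _ = C * γ / (γ - 1) * γ * x ^ a := by ring

lemma meager_of_countIn_le {E : Set ℕ} {C a : ℝ} (ha : a < 1)
    (h : ∀ x ≥ 1, (countIn E x : ℝ) ≤ C * x ^ a) : Meager E := by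
  refine ⟨(a + 1) / 2, by linarith, ?_⟩
  obtain ⟨x₀, hx₀⟩ := eventually_atTop.1 <|
    ((tendsto_rpow_atTop (by linarith : 0 < (a + 1) / 2 - a)).eventually_gt_atTop C).and
      (eventually_ge_atTop 1)
  refine ⟨x₀, fun x hx => ?_⟩
  obtain ⟨hC, hx1⟩ := hx₀ x hx.le
  have hxa : 0 < x ^ a := Real.rpow_pos_of_pos (by linarith) a
  calc (countIn E x : ℝ) ≤ C * x ^ a := h x hx1
    _ < x ^ ((a + 1) / 2 - a) * x ^ a := by gcongr
    _ = x ^ ((a + 1) / 2) := by rw [← Real.rpow_add (by linarith), sub_add_cancel]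

theorem stmt3 (g : ℕ) (hg : 2 ≤ g) (ε : ℝ) (hε : 0 < ε) (k : ℕ) (hk : 1 ≤ k) :
    ∃ δ : ℝ, δ < 1 ∧ ∃ x₀ : ℝ, ∀ x : ℝ, x > x₀ →
      (countIn {n : ℕ | ¬ EpsKNormal g ε k n} x : ℝ) < x ^ δ := by
  obtain ⟨C, a, ha0, ha1, hC⟩ := exists_ncard_not_epsKNormal_length_le_rpow hg hk hε
  obtain ⟨C', hC'⟩ := countIn_le_of_ncard_length_le hg ha0 hC
  exact meager_of_countIn_le ha1 hC'
end

section
/- Let a be any one of the functions φ, σ, λ. Let d be a positive integer and set ℓ := Ω(d). Then for every real x ≥ 1, the number of positive integers n ≤ x with d ∣ a(n) is at most (x/d)·(8·ℓ·(log x)²)^ℓ. -/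
open Filter

/-!
If `d > 1` divides `a n` for a multiplicative `a`, then `d` shares a factor `d₁ > 1` with
`a q` for some prime power `q ∥ n`, and `d / d₁` divides `a (n / q)`. Writing `N(d, x)` for the
count, this gives `N(d, x) ≤ ∑_{d₁ ∣ d, d₁ > 1} ∑_q N(d / d₁, x / q)`, with `q` running over the
prime powers `q ≤ x` with `d₁ ∣ a q`. For `a = φ, σ` one has `0 < a q ≤ 2 q`, and `a (p ^ e)`
determines `p` once `e` is known, so `q ↦ (e, a q / d₁)` is injective and
`∑ 1 / q ≤ (2 / d₁) · log₂ x · H(x) ≤ 6 (log x)² / d₁`. Induction on `d` then closes, because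
`∑_{e ∣ d} y ^ Ω(e) ≤ (y + 1) ^ Ω(d)` and `6 L² ((y + 1) ^ ℓ - y ^ ℓ) ≤ y ^ ℓ` for
`y = 8 ℓ L²`. Finally `λ n ∣ φ n`, so `λ` is covered by `φ`.
-/

open Finset
open scoped ArithmeticFunction.Omega ArithmeticFunction.sigma

lemma one_le_plog (x : ℝ) : 1 ≤ plog x := le_max_left _ _

lemma log_le_plog (x : ℝ) : Real.log x ≤ plog x := le_max_right _ _

lemma plog_mono {x y : ℝ} (hx : 0 < x) (h : x ≤ y) : plog x ≤ plog y :=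
  max_le_max le_rfl (Real.log_le_log hx h)

lemma natLog_two_le_plog {N : ℕ} {x : ℝ} (hN : (N : ℝ) ≤ x) :
    (Nat.log 2 N : ℝ) ≤ 3 / 2 * plog x := by
  obtain rfl | hN0 := eq_or_ne N 0
  · simpa using (zero_lt_one.trans_le (one_le_plog x)).le
  have hpow : (2 : ℝ) ^ Nat.log 2 N ≤ x :=
    le_trans (by exact_mod_cast Nat.pow_log_le_self 2 hN0) hN
  have hlog : Nat.log 2 N * Real.log 2 ≤ plog x := by
    rw [← Real.log_pow]
    exact (Real.log_le_log (by positivity) hpow).trans (log_le_plog x)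
  nlinarith [Real.log_two_gt_d9, one_le_plog x, (Nat.cast_nonneg _ : (0 : ℝ) ≤ Nat.log 2 N)]

lemma harmonic_le_two_mul_plog {N : ℕ} {x : ℝ} (hN : (N : ℝ) ≤ x) :
    (harmonic N : ℝ) ≤ 2 * plog x := by
  obtain rfl | hN0 := eq_or_ne N 0
  · simpa using (zero_lt_one.trans_le (one_le_plog x)).le
  have hlog : Real.log N ≤ plog x :=
    (Real.log_le_log (by positivity) hN).trans (log_le_plog x)
  linarith [harmonic_le_one_add_log N, one_le_plog x]

lemma add_one_pow_sub_pow_le {y : ℝ} (hy : 0 ≤ y) (n : ℕ) :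
    (y + 1) ^ n - y ^ n ≤ n / (y + 1) * (y + 1) ^ n := by
  have hy1 : 0 < y + 1 := by linarith
  have hbern := one_add_mul_le_pow (a := -(y + 1)⁻¹)
    (by linarith [inv_le_one_of_one_le₀ (by linarith : (1 : ℝ) ≤ y + 1)]) n
  rw [show 1 + -(y + 1)⁻¹ = y / (y + 1) by field_simp; ring, div_pow,
    le_div_iff₀ (by positivity)] at hbern
  rw [div_eq_mul_inv]
  linarith

lemma six_mul_sq_mul_sub_pow_le (ℓ : ℕ) {L : ℝ} (hL : 1 ≤ L) :
    6 * L ^ 2 * ((8 * ℓ * L ^ 2 + 1) ^ ℓ - (8 * ℓ * L ^ 2) ^ ℓ) ≤ (8 * ℓ * L ^ 2) ^ ℓ := by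
  set y : ℝ := 8 * ℓ * L ^ 2
  set t : ℝ := ℓ / (y + 1)
  have hy : 0 ≤ y := by positivity
  have hA : 0 ≤ (y + 1) ^ ℓ := by positivity
  have ht : t * (8 * L ^ 2) ≤ 1 := by
    rw [div_mul_eq_mul_div, div_le_one (by positivity)]
    linarith
  have ht8 : t ≤ 1 / 8 := by
    have : 0 ≤ t := by positivity
    nlinarith [mul_le_mul_of_nonneg_left (one_le_pow₀ hL : 1 ≤ L ^ 2) this]
  have hsub := add_one_pow_sub_pow_le hy ℓ
  have h8 : 8 * L ^ 2 * ((y + 1) ^ ℓ - y ^ ℓ) ≤ (y + 1) ^ ℓ := by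
    nlinarith [mul_le_mul_of_nonneg_left hsub (by positivity : (0 : ℝ) ≤ 8 * L ^ 2)]
  have h7 : 7 * (y + 1) ^ ℓ ≤ 8 * y ^ ℓ := by nlinarith
  -- `6 L² ((y + 1) ^ ℓ - y ^ ℓ) ≤ 3 / 4 · (y + 1) ^ ℓ ≤ 6 / 7 · y ^ ℓ`
  nlinarith

lemma cardFactors_le_of_dvd {m n : ℕ} (hn : n ≠ 0) (h : m ∣ n) : Ω m ≤ Ω n := by
  obtain ⟨k, rfl⟩ := h
  rw [ArithmeticFunction.cardFactors_mul (left_ne_zero_of_mul hn) (right_ne_zero_of_mul hn)]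
  exact Nat.le_add_right _ _

lemma two_pow_cardFactors_le {n : ℕ} (hn : n ≠ 0) : 2 ^ Ω n ≤ n := by
  induction n using induction_on_primes with
  | zero => contradiction
  | one => simp
  | prime_mul p a hp ih =>
    have ha : a ≠ 0 := right_ne_zero_of_mul hn
    rw [ArithmeticFunction.cardFactors_mul hp.ne_zero ha,
      ArithmeticFunction.cardFactors_apply_prime hp, pow_add, pow_one]
    exact Nat.mul_le_mul hp.two_le (ih ha)

lemma sum_divisors_pow_cardFactors_le {y : ℝ} (hy : 0 ≤ y) {d : ℕ} (hd : d ≠ 0) :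
    ∑ e ∈ d.divisors, y ^ Ω e ≤ (y + 1) ^ Ω d := by
  induction d using induction_on_primes with
  | zero => contradiction
  | one => simp
  | prime_mul p a hp ih =>
    have ha : a ≠ 0 := right_ne_zero_of_mul hd
    have hΩ : ∀ e ∈ a.divisors, Ω (p * e) = Ω e + 1 := fun e he => by
      rw [ArithmeticFunction.cardFactors_mul hp.ne_zero (Nat.pos_of_mem_divisors he).ne',
        ArithmeticFunction.cardFactors_apply_prime hp, add_comm]
    calc ∑ e ∈ (p * a).divisors, y ^ Ω e
        = ∑ e ∈ ({1, p} ×ˢ a.divisors).image (fun u => u.1 * u.2), y ^ Ω e := by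
          rw [Nat.divisors_mul, hp.divisors, Finset.mul_def]
      _ ≤ ∑ u ∈ {1, p} ×ˢ a.divisors, y ^ Ω (u.1 * u.2) :=
          sum_image_le_of_nonneg fun _ _ => by positivity
      _ = (y + 1) * ∑ e ∈ a.divisors, y ^ Ω e := by
          rw [sum_product, sum_pair hp.one_lt.ne, add_mul, one_mul, mul_sum, add_comm]
          congr 1
          · exact sum_congr rfl fun e he => by rw [hΩ e he, pow_succ, mul_comm]
          · simp
      _ ≤ (y + 1) * (y + 1) ^ Ω a := by gcongr; exact ih ha
      _ = (y + 1) ^ Ω (p * a) := by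
          rw [ArithmeticFunction.cardFactors_mul hp.ne_zero ha,
            ArithmeticFunction.cardFactors_apply_prime hp, pow_add, pow_one]

lemma sum_divisors_erase_one_pow_cardFactors_div_le {y : ℝ} (hy : 0 ≤ y) {d : ℕ} (hd : d ≠ 0) :
    ∑ d₁ ∈ d.divisors.erase 1, y ^ Ω (d / d₁) ≤ (y + 1) ^ Ω d - y ^ Ω d := by
  have hsplit := add_sum_erase d.divisors (fun d₁ => y ^ Ω (d / d₁)) (Nat.one_mem_divisors.2 hd)
  rw [Nat.sum_div_divisors d (fun e => y ^ Ω e), Nat.div_one] at hsplit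
  linarith [sum_divisors_pow_cardFactors_le hy hd]

lemma Nat.div_gcd_dvd_of_dvd_mul {d a b : ℕ} (hd : 0 < d) (h : d ∣ a * b) :
    d / d.gcd a ∣ b := by
  apply (Nat.coprime_div_gcd_div_gcd (Nat.gcd_pos_of_pos_left a hd)).dvd_of_dvd_mul_left
  rw [Nat.div_mul_right_comm (Nat.gcd_dvd_right d a)]
  exact Nat.div_dvd_div (Nat.gcd_dvd_left d a) h

def dvdSet (f : ℕ → ℕ) (d N : ℕ) : Finset ℕ := {n ∈ Icc 1 N | d ∣ f n}

def primePowDvdSet (f : ℕ → ℕ) (d N : ℕ) : Finset ℕ := {q ∈ Icc 1 N | IsPrimePow q ∧ d ∣ f q}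

section Multiplicative

variable {f : ℕ → ℕ}

theorem exists_dvd_apply_ordProj (h1 : f 1 = 1)
    (hmul : ∀ m n, m.Coprime n → f (m * n) = f m * f n) {n d : ℕ} (hn : n ≠ 0) (hd : 1 < d)
    (hdvd : d ∣ f n) :
    ∃ p ∈ n.primeFactors, ∃ d₁, d₁ ∣ d ∧ d₁ ≠ 1 ∧ d₁ ∣ f (ordProj[p] n) ∧
      d / d₁ ∣ f (ordCompl[p] n) := by
  obtain ⟨p, hp, hgcd⟩ : ∃ p ∈ n.primeFactors, d.gcd (f (ordProj[p] n)) ≠ 1 := by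
    by_contra! h
    have hcop : d.Coprime (f n) := by
      rw [Nat.multiplicative_factorization f hmul h1 hn]
      exact Nat.Coprime.prod_right h
    exact hd.ne' (hcop.eq_one_of_dvd hdvd)
  refine ⟨p, hp, _, Nat.gcd_dvd_left _ _, hgcd, Nat.gcd_dvd_right _ _, ?_⟩
  have hcop : (ordProj[p] n).Coprime (ordCompl[p] n) :=
    (Nat.coprime_ordCompl (Nat.prime_of_mem_primeFactors hp) hn).pow_left _
  rw [← Nat.ordProj_mul_ordCompl_eq_self n p, hmul _ _ hcop] at hdvd
  exact Nat.div_gcd_dvd_of_dvd_mul (by omega) hdvd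

theorem card_dvdSet_le_sum (h1 : f 1 = 1) (hmul : ∀ m n, m.Coprime n → f (m * n) = f m * f n)
    {d : ℕ} (hd : 1 < d) (N : ℕ) :
    #(dvdSet f d N) ≤
      ∑ d₁ ∈ d.divisors.erase 1, ∑ q ∈ primePowDvdSet f d₁ N, #(dvdSet f (d / d₁) (N / q)) := by
  have hcover : dvdSet f d N ⊆ (d.divisors.erase 1).biUnion fun d₁ =>
      (primePowDvdSet f d₁ N).biUnion fun q => (dvdSet f (d / d₁) (N / q)).image (q * ·) := by
    intro n hn
    simp only [dvdSet, mem_filter, mem_Icc] at hn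
    obtain ⟨⟨hn1, hnN⟩, hdvd⟩ := hn
    have hn0 : n ≠ 0 := by omega
    obtain ⟨p, hp, d₁, hd₁d, hd₁1, hq, hm⟩ := exists_dvd_apply_ordProj h1 hmul hn0 hd hdvd
    have hpn : n.factorization p ≠ 0 := Finsupp.mem_support_iff.1 (n.support_factorization ▸ hp)
    simp only [mem_biUnion, mem_image, mem_erase, Nat.mem_divisors, primePowDvdSet, dvdSet,
      mem_filter, mem_Icc]
    refine ⟨d₁, ⟨hd₁1, hd₁d, by omega⟩, ordProj[p] n,
      ⟨⟨Nat.ordProj_pos n p, (Nat.ordProj_le p hn0).trans hnN⟩,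
        (Nat.prime_of_mem_primeFactors hp).isPrimePow.pow hpn, hq⟩,
      ordCompl[p] n, ⟨⟨Nat.ordCompl_pos p hn0, ?_⟩, hm⟩, Nat.ordProj_mul_ordCompl_eq_self n p⟩
    rw [Nat.le_div_iff_mul_le (Nat.ordProj_pos n p), mul_comm, Nat.ordProj_mul_ordCompl_eq_self]
    exact hnN
  calc #(dvdSet f d N)
      ≤ #((d.divisors.erase 1).biUnion fun d₁ =>
          (primePowDvdSet f d₁ N).biUnion fun q => (dvdSet f (d / d₁) (N / q)).image (q * ·)) :=
        card_le_card hcover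
    _ ≤ _ := card_biUnion_le.trans <| sum_le_sum fun _ _ =>
        card_biUnion_le.trans <| sum_le_sum fun _ _ => card_image_le

end Multiplicative

structure PrimePowerControl (f : ℕ → ℕ) : Prop where
  pos : ∀ q, IsPrimePow q → 0 < f q
  le_two_mul : ∀ q, IsPrimePow q → f q ≤ 2 * q
  injOn_prime : ∀ e ≠ 0, Set.InjOn (fun p => f (p ^ e)) {p | p.Prime}

namespace PrimePowerControl

variable {f : ℕ → ℕ}

theorem injOn_cardFactors_div (hf : PrimePowerControl f) (d : ℕ) :
    Set.InjOn (fun q => (Ω q, f q / d)) {q | IsPrimePow q ∧ d ∣ f q} := by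
  rintro q ⟨hq, hdq⟩ q' ⟨hq', hdq'⟩ hqq'
  obtain ⟨p, e, hp, he, rfl⟩ := (isPrimePow_nat_iff q).1 hq
  obtain ⟨p', e', hp', -, rfl⟩ := (isPrimePow_nat_iff q').1 hq'
  simp only [Prod.mk.injEq, ArithmeticFunction.cardFactors_apply_prime_pow hp,
    ArithmeticFunction.cardFactors_apply_prime_pow hp'] at hqq'
  obtain ⟨rfl, hquot⟩ := hqq'
  have hfeq : f (p ^ e) = f (p' ^ e) := by
    rw [← Nat.div_mul_cancel hdq, ← Nat.div_mul_cancel hdq', hquot]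
  rw [hf.injOn_prime e he.ne' hp hp' hfeq]

theorem div_mem_Icc (hf : PrimePowerControl f) {d q : ℕ} (hd : 1 < d) (hq : IsPrimePow q)
    (hdq : d ∣ f q) : f q / d ∈ Icc 1 q :=
  mem_Icc.2 ⟨Nat.div_pos (Nat.le_of_dvd (hf.pos q hq) hdq) (by omega),
    (Nat.div_le_div_left hd two_pos).trans (Nat.div_le_of_le_mul (hf.le_two_mul q hq))⟩

theorem inv_le_two_div_mul_inv (hf : PrimePowerControl f) {d q : ℕ} (hd : 1 < d)
    (hq : IsPrimePow q) (hdq : d ∣ f q) :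
    (q : ℝ)⁻¹ ≤ 2 / d * ((f q / d : ℕ) : ℝ)⁻¹ := by
  have hk : (0 : ℝ) < (f q / d : ℕ) := by exact_mod_cast (mem_Icc.1 (hf.div_mem_Icc hd hq hdq)).1
  have hle : ((f q / d : ℕ) : ℝ) * d ≤ 2 * q := by
    exact_mod_cast (Nat.div_mul_cancel hdq).symm ▸ hf.le_two_mul q hq
  have hq0 : (0 : ℝ) < q := by exact_mod_cast hq.pos
  rw [show 2 / (d : ℝ) * ((f q / d : ℕ) : ℝ)⁻¹ = 2 / ((f q / d : ℕ) * d) by field_simp,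
    inv_eq_one_div, div_le_div_iff₀ hq0 (by positivity)]
  linarith

/-- `q ↦ (Ω q, f q / d)` injects `primePowDvdSet f d N` into `[1, log₂ N] × [1, N]`, so the
sum is at most `(2 / d) · log₂ N · H_N`. -/
theorem sum_inv_primePowDvdSet_le (hf : PrimePowerControl f) {d N : ℕ} (hd : 1 < d) {x : ℝ}
    (hN : (N : ℝ) ≤ x) :
    ∑ q ∈ primePowDvdSet f d N, (q : ℝ)⁻¹ ≤ 6 * plog x ^ 2 / d := by
  set S := primePowDvdSet f d N
  set g : ℕ → ℕ × ℕ := fun q => (Ω q, f q / d)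
  have hS : ∀ q ∈ S, q ≤ N ∧ IsPrimePow q ∧ d ∣ f q := fun q hq => by
    simp only [S, primePowDvdSet, mem_filter, mem_Icc] at hq
    exact ⟨hq.1.2, hq.2⟩
  have hmaps : ∀ q ∈ S, g q ∈ Icc 1 (Nat.log 2 N) ×ˢ Icc 1 N := fun q hq => by
    obtain ⟨hqN, hq, hdq⟩ := hS q hq
    have hquot := mem_Icc.1 (hf.div_mem_Icc hd hq hdq)
    refine mem_product.2 ⟨mem_Icc.2 ⟨ArithmeticFunction.cardFactors_pos_iff_one_lt.2 hq.one_lt,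
      (Nat.le_log_iff_pow_le one_lt_two (hq.pos.trans_le hqN).ne').2 ?_⟩,
      mem_Icc.2 ⟨hquot.1, hquot.2.trans hqN⟩⟩
    exact (two_pow_cardFactors_le hq.pos.ne').trans hqN
  have hH : (0 : ℝ) ≤ harmonic N := by rw [harmonic_eq_sum_Icc]; push_cast; positivity
  calc ∑ q ∈ S, (q : ℝ)⁻¹
      ≤ ∑ q ∈ S, 2 / d * ((g q).2 : ℝ)⁻¹ :=
        sum_le_sum fun q hq => hf.inv_le_two_div_mul_inv hd (hS q hq).2.1 (hS q hq).2.2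
    _ = ∑ u ∈ S.image g, 2 / d * (u.2 : ℝ)⁻¹ :=
        (sum_image (f := fun u => 2 / d * (u.2 : ℝ)⁻¹) fun q hq q' hq' =>
          hf.injOn_cardFactors_div d (hS q hq).2 (hS q' hq').2).symm
    _ ≤ ∑ u ∈ Icc 1 (Nat.log 2 N) ×ˢ Icc 1 N, 2 / d * (u.2 : ℝ)⁻¹ :=
        sum_le_sum_of_subset_of_nonneg (image_subset_iff.2 hmaps) fun _ _ _ => by positivity
    _ = Nat.log 2 N * (2 / d * harmonic N) := by
        simp only [sum_product, ← mul_sum, sum_const, Nat.card_Icc, nsmul_eq_mul,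
          harmonic_eq_sum_Icc]
        push_cast
        ring
    _ ≤ 3 / 2 * plog x * (2 / d * (2 * plog x)) := by
        refine mul_le_mul (natLog_two_le_plog hN) ?_ (by positivity) (by linarith [one_le_plog x])
        gcongr
        exact harmonic_le_two_mul_plog hN
    _ = 6 * plog x ^ 2 / d := by ring

theorem sum_card_dvdSet_le (hf : PrimePowerControl f) {e d₁ : ℕ} (hd₁ : 1 < d₁) {x y : ℝ}
    (hx : 1 ≤ x) (hy : 8 * Ω e * plog x ^ 2 ≤ y)
    (ih : ∀ x' : ℝ, 1 ≤ x' →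
      (#(dvdSet f e ⌊x'⌋₊) : ℝ) ≤ x' / e * (8 * Ω e * plog x' ^ 2) ^ Ω e) :
    ∑ q ∈ primePowDvdSet f d₁ ⌊x⌋₊, (#(dvdSet f e (⌊x⌋₊ / q)) : ℝ) ≤
      x / (e * d₁) * (6 * plog x ^ 2) * y ^ Ω e := by
  have hx0 : 0 ≤ x := by linarith
  have hterm : ∀ q ∈ primePowDvdSet f d₁ ⌊x⌋₊,
      (#(dvdSet f e (⌊x⌋₊ / q)) : ℝ) ≤ x / e * y ^ Ω e * (q : ℝ)⁻¹ := fun q hq => by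
    simp only [primePowDvdSet, mem_filter, mem_Icc] at hq
    have hq0 : (0 : ℝ) < q := by exact_mod_cast hq.1.1
    have hqx : (q : ℝ) ≤ x := (Nat.le_floor_iff hx0).1 hq.1.2
    have hxq : 1 ≤ x / q := by rwa [le_div_iff₀ hq0, one_mul]
    have hplog : plog (x / q) ≤ plog x :=
      plog_mono (by linarith) (div_le_self hx0 (by exact_mod_cast hq.1.1))
    have hbase : 8 * Ω e * plog (x / q) ^ 2 ≤ y := by
      refine le_trans ?_ hy
      have := one_le_plog (x / q)
      gcongr
    rw [← Nat.floor_div_natCast]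
    calc (#(dvdSet f e ⌊x / q⌋₊) : ℝ)
        ≤ x / q / e * (8 * Ω e * plog (x / q) ^ 2) ^ Ω e := ih _ hxq
      _ ≤ x / q / e * y ^ Ω e := by
          have := one_le_plog (x / q)
          gcongr
      _ = x / e * y ^ Ω e * (q : ℝ)⁻¹ := by ring
  have hy0 : 0 ≤ y := le_trans (by positivity) hy
  calc ∑ q ∈ primePowDvdSet f d₁ ⌊x⌋₊, (#(dvdSet f e (⌊x⌋₊ / q)) : ℝ)
      ≤ ∑ q ∈ primePowDvdSet f d₁ ⌊x⌋₊, x / e * y ^ Ω e * (q : ℝ)⁻¹ := sum_le_sum hterm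
    _ = x / e * y ^ Ω e * ∑ q ∈ primePowDvdSet f d₁ ⌊x⌋₊, (q : ℝ)⁻¹ := by rw [mul_sum]
    _ ≤ x / e * y ^ Ω e * (6 * plog x ^ 2 / d₁) := by
        gcongr
        exact hf.sum_inv_primePowDvdSet_le hd₁ (Nat.floor_le hx0)
    _ = x / (e * d₁) * (6 * plog x ^ 2) * y ^ Ω e := by ring

theorem card_dvdSet_le (h1 : f 1 = 1) (hmul : ∀ m n, m.Coprime n → f (m * n) = f m * f n)
    (hf : PrimePowerControl f) {d : ℕ} (hd : d ≠ 0) {x : ℝ} (hx : 1 ≤ x) :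
    (#(dvdSet f d ⌊x⌋₊) : ℝ) ≤ x / d * (8 * Ω d * plog x ^ 2) ^ Ω d := by
  induction d using Nat.strong_induction_on generalizing x with
  | _ d ih =>
  obtain rfl | hd1 := eq_or_ne d 1
  · have : #(dvdSet f 1 ⌊x⌋₊) ≤ ⌊x⌋₊ := (card_filter_le _ _).trans (by simp)
    simpa using (Nat.cast_le.2 this).trans (Nat.floor_le (by linarith))
  have hd1 : 1 < d := by omega
  set L := plog x
  set y : ℝ := 8 * Ω d * L ^ 2
  have hy0 : 0 ≤ y := by positivity
  have hblock : ∀ d₁ ∈ d.divisors.erase 1,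
      ∑ q ∈ primePowDvdSet f d₁ ⌊x⌋₊, (#(dvdSet f (d / d₁) (⌊x⌋₊ / q)) : ℝ) ≤
        x / d * (6 * L ^ 2) * y ^ Ω (d / d₁) := fun d₁ hd₁ => by
    rw [mem_erase, Nat.mem_divisors] at hd₁
    obtain ⟨hd₁1, hd₁d, -⟩ := hd₁
    have hd₁0 : d₁ ≠ 0 := ne_zero_of_dvd_ne_zero hd hd₁d
    have hquot0 : d / d₁ ≠ 0 := (Nat.div_ne_zero_iff_of_dvd hd₁d).2 ⟨hd, hd₁0⟩
    have hcast : ((d / d₁ : ℕ) : ℝ) * d₁ = d := by exact_mod_cast Nat.div_mul_cancel hd₁d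
    have hy : 8 * Ω (d / d₁) * L ^ 2 ≤ y := by
      unfold y
      gcongr
      exact cardFactors_le_of_dvd hd (Nat.div_dvd_of_dvd hd₁d)
    rw [← hcast]
    exact hf.sum_card_dvdSet_le (by omega) hx hy fun x' hx' =>
      ih _ (Nat.div_lt_self (by omega) (by omega)) hquot0 hx'
  calc (#(dvdSet f d ⌊x⌋₊) : ℝ)
      ≤ ∑ d₁ ∈ d.divisors.erase 1, ∑ q ∈ primePowDvdSet f d₁ ⌊x⌋₊,
          (#(dvdSet f (d / d₁) (⌊x⌋₊ / q)) : ℝ) := by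
        exact_mod_cast card_dvdSet_le_sum h1 hmul hd1 ⌊x⌋₊
    _ ≤ ∑ d₁ ∈ d.divisors.erase 1, x / d * (6 * L ^ 2) * y ^ Ω (d / d₁) := sum_le_sum hblock
    _ = x / d * (6 * L ^ 2) * ∑ d₁ ∈ d.divisors.erase 1, y ^ Ω (d / d₁) := by rw [mul_sum]
    _ ≤ x / d * (6 * L ^ 2) * ((y + 1) ^ Ω d - y ^ Ω d) := by
        gcongr
        exact sum_divisors_erase_one_pow_cardFactors_div_le hy0 hd
    _ ≤ x / d * y ^ Ω d := by
        rw [mul_assoc]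
        gcongr
        exact six_mul_sq_mul_sub_pow_le (Ω d) (one_le_plog x)

end PrimePowerControl

theorem primePowerControl_totient : PrimePowerControl Nat.totient where
  pos _ hq := Nat.totient_pos.2 hq.pos
  le_two_mul q _ := (Nat.totient_le q).trans (Nat.le_mul_of_pos_left q two_pos)
  injOn_prime e he := StrictMonoOn.injOn fun p (hp : p.Prime) p' (hp' : p'.Prime) hlt => by
    rw [Nat.totient_prime_pow hp (Nat.pos_of_ne_zero he),
      Nat.totient_prime_pow hp' (Nat.pos_of_ne_zero he)]
    exact Nat.mul_lt_mul_of_le_of_lt (Nat.pow_le_pow_left hlt.le _)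
      (by have := hp.two_le; omega) (pow_pos hp'.pos _)

lemma sigma1_eq_sigma_one (n : ℕ) : sigma1 n = σ 1 n := (ArithmeticFunction.sigma_one_apply n).symm

lemma sigma1_mul {m n : ℕ} (h : m.Coprime n) : sigma1 (m * n) = sigma1 m * sigma1 n := by
  simp only [sigma1_eq_sigma_one]
  exact ArithmeticFunction.isMultiplicative_sigma.map_mul_of_coprime h

lemma sigma1_prime_pow {p : ℕ} (hp : p.Prime) (e : ℕ) :
    sigma1 (p ^ e) = ∑ k ∈ range (e + 1), p ^ k := by
  rw [sigma1_eq_sigma_one, ArithmeticFunction.sigma_one_apply_prime_pow hp]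

theorem primePowerControl_sigma1 : PrimePowerControl sigma1 where
  pos q hq := sigma1_eq_sigma_one q ▸ ArithmeticFunction.sigma_pos 1 q hq.pos.ne'
  le_two_mul q hq := by
    obtain ⟨p, e, hp, -, rfl⟩ := (isPrimePow_nat_iff q).1 hq
    rw [sigma1_prime_pow hp, sum_range_succ, two_mul]
    exact Nat.add_le_add_right (Nat.geomSum_lt hp.two_le fun _ => mem_range.1).le _
  injOn_prime e he := StrictMonoOn.injOn fun p (hp : p.Prime) p' (hp' : p'.Prime) hlt => by
    rw [sigma1_prime_pow hp, sigma1_prime_pow hp']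
    exact sum_lt_sum (fun k _ => Nat.pow_le_pow_left hlt.le k)
      ⟨e, self_mem_range_succ e, Nat.pow_lt_pow_left hlt he⟩

lemma carmichael_dvd_totient {n : ℕ} (hn : n ≠ 0) : carmichael n ∣ n.totient := by
  have : NeZero n := ⟨hn⟩
  rw [carmichael, ← ZMod.card_units_eq_totient n]
  exact Group.exponent_dvd_card

lemma dvdSet_carmichael_subset (d N : ℕ) : dvdSet carmichael d N ⊆ dvdSet Nat.totient d N :=
  fun n hn => by
    simp only [dvdSet, mem_filter, mem_Icc] at hn ⊢
    exact ⟨hn.1, hn.2.trans (carmichael_dvd_totient (by omega))⟩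

lemma countIn_dvd_eq_card_dvdSet (f : ℕ → ℕ) (d : ℕ) {x : ℝ} (hx : 0 ≤ x) :
    countIn {n | d ∣ f n} x = #(dvdSet f d ⌊x⌋₊) := by
  rw [countIn, ← Set.ncard_coe_finset]
  congr 1
  ext n
  simp [dvdSet, Nat.le_floor_iff hx, and_assoc, Nat.one_le_iff_ne_zero, Nat.pos_iff_ne_zero]

theorem stmt5 (a : ℕ → ℕ) (ha : a = Nat.totient ∨ a = sigma1 ∨ a = carmichael)
    (d : ℕ) (hd : 1 ≤ d) (x : ℝ) (hx : 1 ≤ x) :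
    (countIn {n : ℕ | d ∣ a n} x : ℝ) ≤
      (x / d) * (8 * BigOmega d * plog x ^ 2) ^ BigOmega d := by
  have hd0 : d ≠ 0 := by omega
  have htotient := PrimePowerControl.card_dvdSet_le Nat.totient_one
    (fun _ _ => Nat.totient_mul) primePowerControl_totient hd0 hx
  rw [countIn_dvd_eq_card_dvdSet a d (by linarith),
    show BigOmega d = Ω d from ArithmeticFunction.cardFactors_apply.symm]
  rcases ha with rfl | rfl | rfl
  · exact htotient
  · exact PrimePowerControl.card_dvdSet_le (by simp [sigma1_eq_sigma_one])
      (fun _ _ => sigma1_mul) primePowerControl_sigma1 hd0 hx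
  · exact le_trans (by exact_mod_cast card_le_card (dvdSet_carmichael_subset d _)) htotient
end

section
/- Let f : ℕ → ℕ be multiplicative (f(1) = 1 and f(mn) = f(m)·f(n) whenever gcd(m,n) = 1) with f(n) ∣ n for every n ≥ 1. Let G = {p prime : f(p) = p}, and assume that ∑_{p ∈ G, p ≤ t} (log p)/p → ∞ as t → ∞. Then (1/n)·∑_{1 ≤ m ≤ n} log f(m) → ∞ as n → ∞. -/
open Filter

/-!
If `p ∈ G` exactly divides `m`, multiplicativity gives `p ∣ f m`, so
`log f(m) ≥ ∑_{p ∈ G, p ∥ m} log p`. Summing over `m ≤ n` and swapping the sums, each `p ≤ n`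
in `G` contributes `log p · #{m ≤ n : p ∥ m} ≥ log p · (n/(2p) - n/p²)`. Since `∑ log p / p²`
converges, the average of `log f(m)` is at least `½ ∑_{p ∈ G, p ≤ n} log p / p - O(1)`.
-/

open Finset Real

lemma plog_eq_log_of_exp_one_le {x : ℝ} (hx : exp 1 ≤ x) : plog x = log x :=
  max_eq_right ((le_log_iff_exp_le ((exp_pos 1).trans_le hx)).2 hx)

lemma plog_le_one_add_log {x : ℝ} (hx : 1 ≤ x) : plog x ≤ 1 + log x :=
  max_le (by linarith [log_nonneg hx]) (by linarith)

lemma sum_plog_div_le_sum_log_div_add_one {s : Finset ℕ} (hs : ∀ p ∈ s, p.Prime) :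
    ∑ p ∈ s, plog p / p ≤ ∑ p ∈ s, log p / p + 1 := by
  have hterm : ∀ p ∈ s, plog p / p ≤ log p / p + if p = 2 then 1 else 0 := by
    intro p hp
    rcases eq_or_ne p 2 with rfl | hp2
    · simp only [Nat.cast_ofNat, if_true]
      linarith [plog_le_one_add_log (x := 2) (by norm_num)]
    · have h3 : (3 : ℝ) ≤ p := by
        have := (hs p hp).two_le
        exact_mod_cast (by omega : 3 ≤ p)
      have he : exp 1 ≤ p := by linarith [exp_one_lt_d9]
      simp [plog_eq_log_of_exp_one_le he, hp2]
  calc ∑ p ∈ s, plog p / p ≤ ∑ p ∈ s, (log p / p + if p = 2 then 1 else 0) := sum_le_sum hterm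
    _ ≤ ∑ p ∈ s, log p / p + 1 := by
      rw [sum_add_distrib, sum_ite_eq']
      split_ifs <;> norm_num

lemma summable_log_div_sq : Summable fun k : ℕ => log k / (k : ℝ) ^ 2 := by
  refine Summable.of_nonneg_of_le (fun k => div_nonneg (log_natCast_nonneg k) (sq_nonneg _))
    (fun k => ?_) ((summable_nat_rpow_inv.2 (by norm_num : (1 : ℝ) < 3 / 2)).mul_left 2)
  rcases k.eq_zero_or_pos with rfl | hk0
  · simp
  have hk : (0 : ℝ) < k := by exact_mod_cast hk0
  have hlog : log k ≤ 2 * (k : ℝ) ^ (1 / 2 : ℝ) := by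
    simpa [div_eq_mul_inv, mul_comm] using log_le_rpow_div hk.le (by norm_num : (0 : ℝ) < 1 / 2)
  have hsplit : (k : ℝ) ^ 2 = (k : ℝ) ^ (1 / 2 : ℝ) * (k : ℝ) ^ (3 / 2 : ℝ) := by
    rw [← rpow_add hk]; norm_num
  rw [hsplit, div_le_iff₀ (by positivity)]
  calc log k ≤ 2 * (k : ℝ) ^ (1 / 2 : ℝ) := hlog
    _ = 2 * ((k : ℝ) ^ (3 / 2 : ℝ))⁻¹ * ((k : ℝ) ^ (1 / 2 : ℝ) * (k : ℝ) ^ (3 / 2 : ℝ)) := by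
      field_simp

lemma sum_log_le_log_of_prime_dvd {P : Finset ℕ} {N : ℕ} (hN : N ≠ 0)
    (hP : ∀ p ∈ P, p.Prime ∧ p ∣ N) : ∑ p ∈ P, log p ≤ log N := by
  have hdvd : ∏ p ∈ P, p ∣ N :=
    prod_primes_dvd N (fun p hp => (hP p hp).1.prime) (fun p hp => (hP p hp).2)
  have hpos : ∀ p ∈ P, (0 : ℝ) < p := fun p hp => by exact_mod_cast (hP p hp).1.pos
  rw [← log_prod (fun p hp => (hpos p hp).ne')]
  refine log_le_log (prod_pos hpos) ?_
  rw [← Nat.cast_prod]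
  exact_mod_cast Nat.le_of_dvd (Nat.pos_of_ne_zero hN) hdvd

lemma card_Icc_filter_dvd_not_sq_dvd (p n : ℕ) :
    #{m ∈ Icc 1 n | p ∣ m ∧ ¬ p ^ 2 ∣ m} = n / p - n / p ^ 2 := by
  have hsub : {m ∈ Ioc 0 n | p ^ 2 ∣ m} ⊆ {m ∈ Ioc 0 n | p ∣ m} :=
    monotone_filter_right _ fun m _ => (dvd_pow_self p two_ne_zero).trans
  have hdiff : {m ∈ Ioc 0 n | p ∣ m ∧ ¬ p ^ 2 ∣ m}
      = {m ∈ Ioc 0 n | p ∣ m} \ {m ∈ Ioc 0 n | p ^ 2 ∣ m} := by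
    ext m; simp only [mem_filter, Finset.mem_sdiff]; tauto
  rw [← Nat.Ioc_filter_dvd_card_eq_div, ← Nat.Ioc_filter_dvd_card_eq_div,
    ← card_sdiff_of_subset hsub, ← hdiff]
  rfl

lemma div_two_mul_sub_div_sq_le_card {p n : ℕ} (hp : 0 < p) (hpn : p ≤ n) :
    (n : ℝ) / (2 * p) - n / p ^ 2 ≤ #{m ∈ Icc 1 n | p ∣ m ∧ ¬ p ^ 2 ∣ m} := by
  rw [card_Icc_filter_dvd_not_sq_dvd,
    Nat.cast_sub (Nat.div_le_div_left (Nat.le_self_pow two_ne_zero p) hp)]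
  have hp' : (0 : ℝ) < p := by exact_mod_cast hp
  have hfloor : (n : ℝ) / (2 * p) < (n / p : ℕ) := by
    rw [← Nat.floor_natCast (R := ℝ) n, ← Nat.floor_div_natCast, Nat.floor_natCast,
      mul_comm, ← div_div]
    exact Nat.div_two_lt_floor ((one_le_div hp').2 (by exact_mod_cast hpn))
  have hsq : ((n / p ^ 2 : ℕ) : ℝ) ≤ n / p ^ 2 := by exact_mod_cast Nat.cast_div_le
  linarith

lemma dvd_apply_of_dvd_of_not_sq_dvd {f : ℕ → ℕ}
    (hfmul : ∀ m n : ℕ, Nat.Coprime m n → f (m * n) = f m * f n) {p m : ℕ} (hp : p.Prime)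
    (hfp : p ∣ f p) (hpm : p ∣ m) (hpm2 : ¬ p ^ 2 ∣ m) : p ∣ f m := by
  obtain ⟨k, rfl⟩ := hpm
  have hpk : ¬ p ∣ k := fun h => hpm2 (by rw [sq]; exact mul_dvd_mul_left p h)
  rw [hfmul p k ((Nat.Prime.coprime_iff_not_dvd hp).2 hpk)]
  exact hfp.mul_right _

lemma sum_log_mul_card_le_sum_log_apply {f : ℕ → ℕ}
    (hfmul : ∀ m n : ℕ, Nat.Coprime m n → f (m * n) = f m * f n)
    (hfdvd : ∀ n : ℕ, 1 ≤ n → f n ∣ n) {P : Finset ℕ} (hP : ∀ p ∈ P, p.Prime ∧ p ∣ f p)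
    (n : ℕ) :
    ∑ p ∈ P, log p * #{m ∈ Icc 1 n | p ∣ m ∧ ¬ p ^ 2 ∣ m} ≤ ∑ m ∈ Icc 1 n, log (f m) := by
  have hcount : ∀ p ∈ P, log p * #{m ∈ Icc 1 n | p ∣ m ∧ ¬ p ^ 2 ∣ m}
      = ∑ m ∈ Icc 1 n with p ∣ m ∧ ¬ p ^ 2 ∣ m, log p := by
    intro p _
    rw [sum_const, nsmul_eq_mul, mul_comm]
  rw [sum_congr rfl hcount]
  simp only [sum_filter]
  rw [sum_comm]
  refine sum_le_sum fun m hm => ?_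
  have hm1 := (mem_Icc.1 hm).1
  rw [← sum_filter]
  refine sum_log_le_log_of_prime_dvd (Nat.pos_of_dvd_of_pos (hfdvd m hm1) hm1).ne' ?_
  intro p hp
  obtain ⟨hpP, hpm, hpm2⟩ := mem_filter.1 hp
  exact ⟨(hP p hpP).1, dvd_apply_of_dvd_of_not_sq_dvd hfmul (hP p hpP).1 (hP p hpP).2 hpm hpm2⟩

lemma mul_sub_le_sum_log_apply {f : ℕ → ℕ}
    (hfmul : ∀ m n : ℕ, Nat.Coprime m n → f (m * n) = f m * f n)
    (hfdvd : ∀ n : ℕ, 1 ≤ n → f n ∣ n) {n : ℕ} {P : Finset ℕ}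
    (hP : ∀ p ∈ P, p.Prime ∧ p ∣ f p ∧ p ≤ n) :
    n * ((∑ p ∈ P, log p / p) / 2 - ∑' k : ℕ, log k / (k : ℝ) ^ 2)
      ≤ ∑ m ∈ Icc 1 n, log (f m) := by
  have htail : ∑ p ∈ P, log p / (p : ℝ) ^ 2 ≤ ∑' k : ℕ, log k / (k : ℝ) ^ 2 :=
    summable_log_div_sq.sum_le_tsum P fun k _ => div_nonneg (log_natCast_nonneg k) (sq_nonneg _)
  calc n * ((∑ p ∈ P, log p / p) / 2 - ∑' k : ℕ, log k / (k : ℝ) ^ 2)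
      ≤ n * ((∑ p ∈ P, log p / p) / 2 - ∑ p ∈ P, log p / (p : ℝ) ^ 2) := by gcongr
    _ = ∑ p ∈ P, log p * ((n : ℝ) / (2 * p) - n / p ^ 2) := by
      rw [sum_div, mul_sub, mul_sum, mul_sum, ← sum_sub_distrib]
      exact sum_congr rfl fun p _ => by ring
    _ ≤ ∑ p ∈ P, log p * #{m ∈ Icc 1 n | p ∣ m ∧ ¬ p ^ 2 ∣ m} :=
      sum_le_sum fun p hp => mul_le_mul_of_nonneg_left
        (div_two_mul_sub_div_sq_le_card (hP p hp).1.pos (hP p hp).2.2) (log_natCast_nonneg p)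
    _ ≤ ∑ m ∈ Icc 1 n, log (f m) :=
      sum_log_mul_card_le_sum_log_apply hfmul hfdvd (fun p hp => ⟨(hP p hp).1, (hP p hp).2.1⟩) n

open scoped Classical in
theorem stmt14_general (f : ℕ → ℕ)
    (hfmul : ∀ m n : ℕ, Nat.Coprime m n → f (m * n) = f m * f n)
    (hfdvd : ∀ n : ℕ, 1 ≤ n → f n ∣ n)
    (hG : Filter.Tendsto
      (fun t : ℝ => ∑ p ∈ (Finset.Icc 1 ⌊t⌋₊).filter (fun p => p.Prime ∧ f p = p),
        plog p / p) Filter.atTop Filter.atTop) :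
    Filter.Tendsto (fun n : ℕ => (∑ m ∈ Finset.Icc 1 n, plog (f m)) / n)
      Filter.atTop Filter.atTop := by
  set G : ℕ → Finset ℕ := fun n => (Icc 1 n).filter (fun p => p.Prime ∧ f p = p)
  set C : ℝ := ∑' k : ℕ, log k / (k : ℝ) ^ 2
  have hGn : Tendsto (fun n : ℕ => ∑ p ∈ G n, plog p / p) atTop atTop := by
    simpa only [Function.comp_def, Nat.floor_natCast] using hG.comp tendsto_natCast_atTop_atTop
  have hlower : ∀ n ≥ 1, (∑ p ∈ G n, plog p / p - 1) / 2 - C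
      ≤ (∑ m ∈ Icc 1 n, plog (f m)) / n := by
    intro n hn
    have hP : ∀ p ∈ G n, p.Prime ∧ p ∣ f p ∧ p ≤ n := fun p hp => by
      simp only [G, mem_filter, mem_Icc] at hp
      exact ⟨hp.2.1, hp.2.2.symm ▸ dvd_rfl, hp.1.2⟩
    have hplog := sum_plog_div_le_sum_log_div_add_one fun p hp => (hP p hp).1
    have hlog := mul_sub_le_sum_log_apply hfmul hfdvd hP
    have hle : ∑ m ∈ Icc 1 n, log (f m) ≤ ∑ m ∈ Icc 1 n, plog (f m) :=
      sum_le_sum fun m _ => le_max_right _ _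
    rw [le_div_iff₀ (by exact_mod_cast hn)]
    calc ((∑ p ∈ G n, plog p / p - 1) / 2 - C) * n
        ≤ n * ((∑ p ∈ G n, log p / p) / 2 - C) := by
          rw [mul_comm]
          gcongr
          linarith
      _ ≤ ∑ m ∈ Icc 1 n, plog (f m) := hlog.trans hle
  refine tendsto_atTop_mono' _ (eventually_atTop.2 ⟨1, hlower⟩) ?_
  exact tendsto_atTop_add_const_right _ _
    (((tendsto_atTop_add_const_right _ _ hGn).atTop_div_const two_pos))

open scoped Classical in
theorem stmt14 (f : ℕ → ℕ)
    (hf1 : f 1 = 1) (hfmul : ∀ m n : ℕ, Nat.Coprime m n → f (m * n) = f m * f n)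
    (hfdvd : ∀ n : ℕ, 1 ≤ n → f n ∣ n)
    (hG : Filter.Tendsto
      (fun t : ℝ => ∑ p ∈ (Finset.Icc 1 ⌊t⌋₊).filter (fun p => p.Prime ∧ f p = p),
        plog p / p) Filter.atTop Filter.atTop) :
    Filter.Tendsto (fun n : ℕ => (∑ m ∈ Finset.Icc 1 n, plog (f m)) / n)
      Filter.atTop Filter.atTop :=
  stmt14_general f hfmul hfdvd hG
end

section
/- Fix an integer base g ≥ 2. Let f : ℕ → ℕ be multiplicative (f(1) = 1 and f(mn) = f(m)·f(n) whenever gcd(m,n) = 1) with f(n) ∣ n for every n ≥ 1. Suppose the set G = {p prime : f(p) = p} is finite and that f(p^k) = 1 for every prime p ∉ G and every k ≥ 1. Then the concatenated digit sequence of f is NOT g-normal: there exist k ≥ 1 and a word w ∈ {0,…,g−1}^k such that (1/N)·#{j : 0 ≤ j ≤ N−k and D_{j+i} = w_i for all 0 ≤ i < k} does not tend to g^{−k} as N → ∞. -/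
open Filter

/-!
The value `f n` depends only on the valuations `v_p(n)` for the finitely many primes `p ∈ G`.
With `M = ∏_{p ∈ G} p ^ (⌊log_p t⌋ + 1)` these valuations agree at `M m + j` and `j` for
`1 ≤ j ≤ t`, so `f (M m + j) = f j`: the word `W` formed by the digits of `f 1, …, f t` recurs
at the start of every block of `M` consecutive arguments. Since `f n ≤ ∏_{p ∈ G} p ^ v_p(n)` and
`∑_{n ≤ N} v_p(n) = v_p(N!) ≤ N`, the digits of `f 1, …, f N` number `O(N)`. Thus `W` occurs with
frequency `≫ 1 / M ≫ t ^ (-|G|)`, whereas normality forces frequency `g ^ (-|W|) ≤ 2 ^ (-t)`.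
-/

def digitBlocks (g : ℕ) (f : ℕ → ℕ) (N : ℕ) : List ℕ :=
  (List.range N).flatMap fun i => Nat.digits g (f (i + 1))

section DigitBlocks

variable (g : ℕ) (f : ℕ → ℕ)

theorem digitBlocks_add (a b : ℕ) :
    digitBlocks g f (a + b) =
      digitBlocks g f a ++ (List.range b).flatMap fun i => Nat.digits g (f (a + i + 1)) := by
  rw [digitBlocks, List.range_add, List.flatMap_append, List.flatMap_map]
  rfl

theorem digitBlocks_prefix {a b : ℕ} (hab : a ≤ b) : digitBlocks g f a <+: digitBlocks g f b := by
  obtain ⟨c, rfl⟩ := Nat.exists_eq_add_of_le hab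
  rw [digitBlocks_add]
  exact List.prefix_append _ _

theorem length_digitBlocks (N : ℕ) :
    (digitBlocks g f N).length = ∑ i ∈ Finset.range N, (Nat.digits g (f (i + 1))).length := by
  simp [digitBlocks, List.length_flatMap, Finset.sum, Multiset.range]

variable {f} (hf : ∀ n, n ≠ 0 → f n ≠ 0)
include hf

theorem strictMono_length_digitBlocks : StrictMono fun N => (digitBlocks g f N).length := by
  refine strictMono_nat_of_lt_succ fun N => ?_
  have hne : Nat.digits g (f (N + 1)) ≠ [] :=
    Nat.digits_ne_nil_iff_ne_zero.mpr (hf _ N.succ_ne_zero)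
  simpa [digitBlocks_add] using List.length_pos_iff.mpr hne

theorem le_length_digitBlocks (N : ℕ) : N ≤ (digitBlocks g f N).length :=
  (strictMono_length_digitBlocks g hf).id_le N

theorem digitSeq_eq_getElem {N j : ℕ} (hj : j < (digitBlocks g f N).length) :
    digitSeq g f j = (digitBlocks g f N)[j] := by
  have hj' : j < (digitBlocks g f (j + 1)).length := le_length_digitBlocks g hf (j + 1)
  change (digitBlocks g f (j + 1)).getD j 0 = _
  rw [List.getD_eq_getElem _ _ hj']
  rcases le_total (j + 1) N with h | h
  · exact (digitBlocks_prefix g f h).getElem hj'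
  · exact ((digitBlocks_prefix g f h).getElem hj).symm

theorem digitSeq_length_digitBlocks_add {a b : ℕ} {w : List ℕ}
    (h : digitBlocks g f b = digitBlocks g f a ++ w) :
    ∀ i < w.length, digitSeq g f ((digitBlocks g f a).length + i) = w.getD i 0 := by
  intro i hi
  have hlt : (digitBlocks g f a).length + i < (digitBlocks g f b).length := by
    simp [h, hi]
  rw [digitSeq_eq_getElem g hf hlt, List.getD_eq_getElem _ _ hi]
  simp only [h]
  rw [List.getElem_append_right (by omega)]
  simp

end DigitBlocks

theorem card_le_occCount {D : ℕ → ℕ} {w : List ℕ} {N : ℕ} (s : Finset ℕ)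
    (hs : ∀ j ∈ s, j + w.length ≤ N ∧ ∀ i < w.length, D (j + i) = w.getD i 0) :
    s.card ≤ occCount D w N := by
  rw [← Set.ncard_coe_finset]
  refine Set.ncard_le_ncard (fun j hj => hs j hj) ?_
  exact (Set.finite_Iic N).subset fun j hj => le_trans (Nat.le_add_right j _) hj.1

theorem not_isNormal_of_eventually_le_occCount {g : ℕ} {D : ℕ → ℕ} {w : List ℕ} (hw : w ≠ [])
    (hwg : ∀ d ∈ w, d < g) {c : ℝ} (hc : ((g : ℝ) ^ w.length)⁻¹ < c) {L : ℕ → ℕ}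
    (hL : Tendsto L atTop atTop) (hocc : ∀ᶠ K in atTop, c * L K ≤ occCount D w (L K)) :
    ¬ IsNormal g D := by
  intro hD
  have hle : c ≤ ((g : ℝ) ^ w.length)⁻¹ := by
    refine ge_of_tendsto ((hD w hw hwg).comp hL) ?_
    filter_upwards [hocc, hL.eventually_gt_atTop 0] with K hK hK0
    rw [Function.comp_apply, le_div_iff₀ (by exact_mod_cast hK0)]
    exact hK
  linarith

section Periodic

variable {g : ℕ} {f : ℕ → ℕ} {M t : ℕ}
  (hper : ∀ m j, 0 < j → j ≤ t → f (M * m + j) = f j)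
include hper

theorem digitBlocks_mul_add (m : ℕ) :
    digitBlocks g f (M * m + t) = digitBlocks g f (M * m) ++ digitBlocks g f t := by
  rw [digitBlocks_add]
  congr 1
  refine List.flatMap_congr fun i hi => ?_
  rw [add_assoc, hper m (i + 1) i.succ_pos (List.mem_range.mp hi)]

variable (hf : ∀ n, n ≠ 0 → f n ≠ 0) (hM : 0 < M)
include hf hM

theorem succ_le_occCount_digitSeq (K : ℕ) :
    K + 1 ≤ occCount (digitSeq g f) (digitBlocks g f t) (digitBlocks g f (M * K + t)).length := by
  have hpos : StrictMono fun m => (digitBlocks g f (M * m)).length :=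
    (strictMono_length_digitBlocks g hf).comp (strictMono_mul_left_of_pos hM)
  calc K + 1 = ((Finset.range (K + 1)).image fun m => (digitBlocks g f (M * m)).length).card := by
        rw [Finset.card_image_of_injective _ hpos.injective, Finset.card_range]
    _ ≤ _ := by
        refine card_le_occCount _ fun j hj => ?_
        obtain ⟨m, hm, rfl⟩ := Finset.mem_image.mp hj
        refine ⟨?_, digitSeq_length_digitBlocks_add g hf (digitBlocks_mul_add hper m)⟩
        rw [← List.length_append, ← digitBlocks_mul_add hper]
        refine (digitBlocks_prefix g f ?_).length_le
        have := Nat.mul_le_mul_left M (Nat.lt_succ_iff.mp (Finset.mem_range.mp hm))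
        omega

theorem not_isNormal_digitSeq_of_periodic (hg : 1 < g) (ht : 0 < t) {C : ℕ}
    (hlen : ∀ N, (digitBlocks g f N).length ≤ C * N) (hCM : 2 * C * M < g ^ t) :
    ¬ IsNormal g (digitSeq g f) := by
  have hW : t ≤ (digitBlocks g f t).length := le_length_digitBlocks g hf t
  have hC : 0 < C := by have := (le_length_digitBlocks g hf 1).trans (hlen 1); omega
  refine not_isNormal_of_eventually_le_occCount (w := digitBlocks g f t)
    (c := ((2 * C * M : ℕ) : ℝ)⁻¹) (L := fun K => (digitBlocks g f (M * K + t)).length)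
    (List.ne_nil_of_length_pos (by omega)) ?_ ?_ ?_ ?_
  · intro d hd
    obtain ⟨i, -, hdi⟩ := List.mem_flatMap.mp hd
    exact Nat.digits_lt_base hg hdi
  · refine inv_strictAnti₀ (by positivity) ?_
    exact_mod_cast hCM.trans_le (Nat.pow_le_pow_right (by omega) hW)
  · refine tendsto_atTop_mono (fun K => ?_) tendsto_id
    have := le_length_digitBlocks g hf (M * K + t)
    have := Nat.le_mul_of_pos_left K hM
    simp only [id]; omega
  · filter_upwards [eventually_ge_atTop t] with K hK
    have hMK : M * K + t ≤ 2 * M * K := by nlinarith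
    have hL : ((digitBlocks g f (M * K + t)).length : ℝ) ≤ C * (2 * M * K) := by
      exact_mod_cast (hlen _).trans (Nat.mul_le_mul_left C hMK)
    calc ((2 * C * M : ℕ) : ℝ)⁻¹ * (digitBlocks g f (M * K + t)).length
        ≤ ((2 * C * M : ℕ) : ℝ)⁻¹ * (C * (2 * M * K)) := by gcongr
      _ = K := by field_simp; push_cast; ring
      _ ≤ _ := by exact_mod_cast (Nat.le_succ K).trans (succ_le_occCount_digitSeq hper hf hM K)

end Periodic

theorem Nat.factorization_add_of_pow_dvd {p a j : ℕ} (hp : p.Prime) (hj : j ≠ 0)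
    (ha : p ^ (j.factorization p + 1) ∣ a) : (a + j).factorization p = j.factorization p := by
  have haj : a + j ≠ 0 := by omega
  refine le_antisymm ?_ ?_
  · by_contra! hlt
    have hdvd : p ^ (j.factorization p + 1) ∣ a + j :=
      (hp.pow_dvd_iff_le_factorization haj).mpr hlt
    exact Nat.pow_succ_factorization_not_dvd hj hp ((Nat.dvd_add_right ha).mp hdvd)
  · refine (hp.pow_dvd_iff_le_factorization haj).mp (Nat.dvd_add ?_ (Nat.ordProj_dvd j p))
    exact (pow_dvd_pow p (Nat.le_succ _)).trans ha

theorem sum_range_factorization_succ_le {p : ℕ} (hp : p.Prime) (N : ℕ) :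
    ∑ i ∈ Finset.range N, (i + 1).factorization p ≤ N := by
  have hfact : ∑ i ∈ Finset.range N, (i + 1).factorization p = N.factorial.factorization p := by
    rw [← Finset.prod_range_add_one_eq_factorial, Nat.factorization_prod (fun i _ => i.succ_ne_zero),
      Finsupp.finsetSum_apply]
  rw [hfact]
  exact (Nat.factorization_factorial_le_div_pred hp N).trans (Nat.div_le_self _ _)

theorem prod_pow_log_succ_le (G : Finset ℕ) {t : ℕ} (ht : t ≠ 0) :
    ∏ p ∈ G, p ^ (Nat.log p t + 1) ≤ (∏ p ∈ G, p) * t ^ G.card := by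
  calc ∏ p ∈ G, p ^ (Nat.log p t + 1) ≤ ∏ p ∈ G, t * p :=
        Finset.prod_le_prod' fun p _ => Nat.mul_le_mul_right p (Nat.pow_log_le_self p ht)
    _ = (∏ p ∈ G, p) * t ^ G.card := by rw [Finset.prod_mul_distrib, Finset.prod_const, mul_comm]

theorem length_digits_le_of_le_prod_pow {g : ℕ} (hg : 1 < g) (G : Finset ℕ) (e : ℕ → ℕ) {x : ℕ}
    (hx : x ≤ ∏ p ∈ G, p ^ e p) :
    (Nat.digits g x).length ≤ ∑ p ∈ G, (Nat.log g p + 1) * e p + 1 := by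
  rw [Nat.digits_length_le_iff hg]
  calc x ≤ ∏ p ∈ G, p ^ e p := hx
    _ ≤ ∏ p ∈ G, g ^ ((Nat.log g p + 1) * e p) := Finset.prod_le_prod' fun p _ => by
        rw [pow_mul]
        exact Nat.pow_le_pow_left (Nat.lt_pow_succ_log_self hg p).le _
    _ = g ^ ∑ p ∈ G, (Nat.log g p + 1) * e p := Finset.prod_pow_eq_pow_sum _ _ _
    _ < _ := Nat.pow_lt_pow_succ hg

theorem eventually_mul_pow_lt_two_pow (a r : ℕ) : ∀ᶠ t in atTop, a * t ^ r < 2 ^ t := by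
  have hlim := tendsto_pow_const_div_const_pow_of_one_lt r (show (1 : ℝ) < 2 by norm_num)
  filter_upwards [hlim.eventually (eventually_lt_nhds (show (0 : ℝ) < (a + 1 : ℝ)⁻¹ by positivity))]
    with t ht
  rw [div_lt_iff₀ (by positivity), ← div_eq_inv_mul, lt_div_iff₀ (by positivity)] at ht
  have : (a : ℝ) * t ^ r < 2 ^ t := by nlinarith [pow_nonneg (Nat.cast_nonneg t : (0 : ℝ) ≤ t) r]
  exact_mod_cast this

section Multiplicative

variable {f : ℕ → ℕ} {G : Finset ℕ} (hf1 : f 1 = 1)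
  (hfmul : ∀ m n : ℕ, Nat.Coprime m n → f (m * n) = f m * f n)
  (htriv : ∀ p : ℕ, p.Prime → p ∉ G → ∀ k : ℕ, 1 ≤ k → f (p ^ k) = 1)
include hf1 hfmul htriv

theorem apply_eq_prod_apply_pow_factorization {n : ℕ} (hn : n ≠ 0) :
    f n = ∏ p ∈ G, f (p ^ n.factorization p) := by
  rw [Nat.multiplicative_factorization f hfmul hf1 hn, Finsupp.prod]
  rw [Finset.prod_subset Finset.subset_union_left (s₂ := n.factorization.support ∪ G),
    ← Finset.prod_subset Finset.subset_union_right]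
  · intro p hp hpG
    have hpn : p ∈ n.factorization.support := by simpa [hpG] using hp
    refine htriv p ?_ hpG _ (Nat.pos_of_ne_zero (Finsupp.mem_support_iff.mp hpn))
    exact Nat.prime_of_mem_primeFactors (Nat.support_factorization n ▸ hpn)
  · intro p _ hp
    rw [Finsupp.notMem_support_iff.mp hp, pow_zero, hf1]

theorem apply_mul_add_eq_apply (hG : ∀ p ∈ G, p.Prime) {M t : ℕ}
    (hM : ∀ p ∈ G, p ^ (Nat.log p t + 1) ∣ M) (m j : ℕ) (hj : 0 < j) (hjt : j ≤ t) :
    f (M * m + j) = f j := by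
  rw [apply_eq_prod_apply_pow_factorization hf1 hfmul htriv (by omega : M * m + j ≠ 0),
    apply_eq_prod_apply_pow_factorization hf1 hfmul htriv hj.ne']
  refine Finset.prod_congr rfl fun p hp => ?_
  have hv : j.factorization p ≤ Nat.log p t :=
    Nat.le_log_of_pow_le (hG p hp).one_lt ((Nat.ordProj_le p hj.ne').trans hjt)
  rw [Nat.factorization_add_of_pow_dvd (hG p hp) hj.ne'
    (((pow_dvd_pow p (by omega)).trans (hM p hp)).mul_right m)]

theorem length_digitBlocks_le {g : ℕ} (hg : 1 < g) (hG : ∀ p ∈ G, p.Prime)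
    (hfdvd : ∀ n : ℕ, 1 ≤ n → f n ∣ n) (N : ℕ) :
    (digitBlocks g f N).length ≤ (1 + ∑ p ∈ G, (Nat.log g p + 1)) * N := by
  have hblock (i : ℕ) : (Nat.digits g (f (i + 1))).length ≤
      ∑ p ∈ G, (Nat.log g p + 1) * (i + 1).factorization p + 1 := by
    refine length_digits_le_of_le_prod_pow hg G _ ?_
    rw [apply_eq_prod_apply_pow_factorization hf1 hfmul htriv i.succ_ne_zero]
    refine Finset.prod_le_prod' fun p hp => Nat.le_of_dvd (pow_pos (hG p hp).pos _) ?_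
    exact hfdvd _ (Nat.one_le_pow _ _ (hG p hp).pos)
  calc (digitBlocks g f N).length
      ≤ ∑ i ∈ Finset.range N, (∑ p ∈ G, (Nat.log g p + 1) * (i + 1).factorization p + 1) := by
        rw [length_digitBlocks]; exact Finset.sum_le_sum fun i _ => hblock i
    _ = ∑ p ∈ G, (Nat.log g p + 1) * ∑ i ∈ Finset.range N, (i + 1).factorization p + N := by
        simp only [Finset.sum_add_distrib, Finset.mul_sum, Finset.sum_const, Finset.card_range,
          smul_eq_mul, mul_one]
        rw [Finset.sum_comm]
    _ ≤ ∑ p ∈ G, (Nat.log g p + 1) * N + N := by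
        gcongr with p hp
        exact sum_range_factorization_succ_le (hG p hp) N
    _ = (1 + ∑ p ∈ G, (Nat.log g p + 1)) * N := by rw [← Finset.sum_mul]; ring

end Multiplicative

theorem stmt15 (g : ℕ) (hg : 2 ≤ g) (f : ℕ → ℕ)
    (hf1 : f 1 = 1) (hfmul : ∀ m n : ℕ, Nat.Coprime m n → f (m * n) = f m * f n)
    (hfdvd : ∀ n : ℕ, 1 ≤ n → f n ∣ n)
    (hGfin : {p : ℕ | p.Prime ∧ f p = p}.Finite)
    (hsmall : ∀ p : ℕ, p.Prime → f p ≠ p → ∀ k : ℕ, 1 ≤ k → f (p ^ k) = 1) :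
    ¬ IsNormal g (digitSeq g f) := by
  set G := hGfin.toFinset
  have hG : ∀ p ∈ G, p.Prime := fun p hp => (hGfin.mem_toFinset.mp hp).1
  have htriv : ∀ p : ℕ, p.Prime → p ∉ G → ∀ k : ℕ, 1 ≤ k → f (p ^ k) = 1 :=
    fun p hp hpG => hsmall p hp fun hfp => hpG (hGfin.mem_toFinset.mpr ⟨hp, hfp⟩)
  have hf0 : ∀ n, n ≠ 0 → f n ≠ 0 := fun n hn h0 =>
    hn (Nat.eq_zero_of_zero_dvd (h0 ▸ hfdvd n (Nat.one_le_iff_ne_zero.mpr hn)))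
  set C := 1 + ∑ p ∈ G, (Nat.log g p + 1)
  obtain ⟨t, htC, ht⟩ := ((eventually_mul_pow_lt_two_pow (2 * C * ∏ p ∈ G, p) G.card).and
    (eventually_gt_atTop 0)).exists
  set M := ∏ p ∈ G, p ^ (Nat.log p t + 1)
  have hM : 0 < M := Finset.prod_pos fun p hp => pow_pos (hG p hp).pos _
  refine not_isNormal_digitSeq_of_periodic
    (apply_mul_add_eq_apply hf1 hfmul htriv hG fun p hp => Finset.dvd_prod_of_mem _ hp)
    hf0 hM hg ht (length_digitBlocks_le hf1 hfmul htriv hg hG hfdvd) ?_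
  calc 2 * C * M ≤ 2 * C * ((∏ p ∈ G, p) * t ^ G.card) :=
        Nat.mul_le_mul_left _ (prod_pow_log_succ_le G ht.ne')
    _ < 2 ^ t := by rwa [← mul_assoc]
    _ ≤ g ^ t := Nat.pow_le_pow_left hg t
end

section
/- Fix an integer base g ≥ 2. Let f : ℕ → ℕ be multiplicative (f(1) = 1 and f(mn) = f(m)·f(n) whenever gcd(m,n) = 1) with f(n) ∣ n for every n ≥ 1. Suppose the set G = {p prime : f(p) = p} is finite and that f(p^k) = 1 for every prime p ∉ G and every k ≥ 1. Then there exists a constant C (depending only on f and g) such that ∑_{1 ≤ m ≤ n} L(f(m)) ≤ C·n for all n ≥ 1. -/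
open Filter

/-!
Let `G` be the finite set of primes fixed by `f` and `c = max G`. Since `f` kills every prime
power outside `G` and `f (p ^ k) ∣ p ^ k ≤ c ^ k` for `p ∈ G`, multiplicativity gives
`f m ≤ c ^ w m` with `w m = ∑_{p ∈ G} v_p(m)`, so `f m` has `O(w m + 1)` digits. Finally
`∑_{m ≤ n} v_p(m) = v_p(n!) ≤ n`, so the digit lengths sum to `O(n)`.
-/

namespace Nat

theorem sum_factorization_Icc_le (n p : ℕ) :
    ∑ m ∈ Finset.Icc 1 n, m.factorization p ≤ n := by
  by_cases hp : p.Prime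
  · have hprod : ∏ m ∈ Finset.Icc 1 n, m = n.factorial := by
      rw [← Finset.Ico_add_one_right_eq_Icc, Finset.prod_Ico_id_eq_factorial]
    have hsum : ∑ m ∈ Finset.Icc 1 n, m.factorization p = n.factorial.factorization p := by
      rw [← hprod, factorization_prod fun m hm => by
        have := (Finset.mem_Icc.mp hm).1; omega]
      simp
    rw [hsum]
    exact (factorization_factorial_le_div_pred hp n).trans (Nat.div_le_self _ _)
  · simp [factorization_eq_zero_of_not_prime _ hp]

theorem sum_Icc_sum_factorization_le (n : ℕ) (s : Finset ℕ) :
    ∑ m ∈ Finset.Icc 1 n, ∑ p ∈ s, m.factorization p ≤ s.card * n := by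
  rw [Finset.sum_comm]
  calc ∑ p ∈ s, ∑ m ∈ Finset.Icc 1 n, m.factorization p ≤ ∑ _p ∈ s, n :=
        Finset.sum_le_sum fun p _ => sum_factorization_Icc_le n p
    _ = s.card * n := by rw [Finset.sum_const, smul_eq_mul]

theorem digits_length_le_of_le_pow {b c k x : ℕ} (hb : 2 ≤ b) (hx : x ≤ c ^ k) :
    (b.digits x).length ≤ (log 2 c + 1) * k + 1 := by
  rw [digits_length_le_iff (by omega)]
  calc x ≤ c ^ k := hx
    _ ≤ (2 ^ (log 2 c + 1)) ^ k := Nat.pow_le_pow_left (lt_pow_succ_log_self one_lt_two c).le k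
    _ < 2 ^ ((log 2 c + 1) * k + 1) := by rw [← pow_mul]; exact Nat.pow_lt_pow_succ one_lt_two
    _ ≤ b ^ ((log 2 c + 1) * k + 1) := Nat.pow_le_pow_left hb _

theorem le_pow_sum_factorization_of_multiplicative {f : ℕ → ℕ} {s : Finset ℕ} {c : ℕ}
    (hf1 : f 1 = 1) (hfmul : ∀ m n : ℕ, Coprime m n → f (m * n) = f m * f n)
    (hmem : ∀ p ∈ s, p.Prime → ∀ k, 1 ≤ k → f (p ^ k) ≤ c ^ k)
    (hnotMem : ∀ p ∉ s, p.Prime → ∀ k, 1 ≤ k → f (p ^ k) ≤ 1) :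
    ∀ m ≠ 0, f m ≤ c ^ ∑ p ∈ s, m.factorization p := by
  intro m
  induction m using recOnPosPrimePosCoprime with
  | zero => intro h; exact absurd rfl h
  | one => intro _; simp [hf1]
  | prime_pow p k hp hk =>
    intro _
    have hw : ∑ q ∈ s, (p ^ k).factorization q = if p ∈ s then k else 0 := by
      simp [hp.factorization_pow, Finsupp.single_apply]
    by_cases hps : p ∈ s
    · rw [hw, if_pos hps]; exact hmem p hps hp k hk
    · rw [hw, if_neg hps, pow_zero]; exact hnotMem p hps hp k hk
  | coprime a b ha hb hab iha ihb =>
    intro _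
    have hw : ∑ p ∈ s, (a * b).factorization p
        = ∑ p ∈ s, a.factorization p + ∑ p ∈ s, b.factorization p := by
      rw [← Finset.sum_add_distrib, factorization_mul (by omega) (by omega)]
      rfl
    rw [hfmul a b hab, hw, pow_add]
    exact Nat.mul_le_mul (iha (by omega)) (ihb (by omega))

end Nat

theorem stmt16 (g : ℕ) (hg : 2 ≤ g) (f : ℕ → ℕ)
    (hf1 : f 1 = 1) (hfmul : ∀ m n : ℕ, Nat.Coprime m n → f (m * n) = f m * f n)
    (hfdvd : ∀ n : ℕ, 1 ≤ n → f n ∣ n)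
    (hGfin : {p : ℕ | p.Prime ∧ f p = p}.Finite)
    (hsmall : ∀ p : ℕ, p.Prime → f p ≠ p → ∀ k : ℕ, 1 ≤ k → f (p ^ k) = 1) :
    ∃ C : ℝ, ∀ n : ℕ, 1 ≤ n →
      (∑ m ∈ Finset.Icc 1 n, ((Nat.digits g (f m)).length : ℝ)) ≤ C * n := by
  set G := hGfin.toFinset
  set c := G.sup id
  set t := Nat.log 2 c + 1
  have hbound : ∀ m ≠ 0, f m ≤ c ^ ∑ p ∈ G, m.factorization p := by
    refine Nat.le_pow_sum_factorization_of_multiplicative hf1 hfmul (fun p hpG hp k hk => ?_)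
      (fun p hpG hp k hk => ?_)
    · calc f (p ^ k) ≤ p ^ k :=
            Nat.le_of_dvd (pow_pos hp.pos k) (hfdvd _ (Nat.one_le_pow _ _ hp.pos))
        _ ≤ c ^ k := Nat.pow_le_pow_left (Finset.le_sup (f := id) hpG) k
    · exact (hsmall p hp (fun h => hpG (hGfin.mem_toFinset.mpr ⟨hp, h⟩)) k hk).le
  refine ⟨(t * G.card + 1 : ℕ), fun n _ => ?_⟩
  have hnat : ∑ m ∈ Finset.Icc 1 n, (g.digits (f m)).length ≤ (t * G.card + 1) * n :=
    calc ∑ m ∈ Finset.Icc 1 n, (g.digits (f m)).length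
        ≤ ∑ m ∈ Finset.Icc 1 n, (t * ∑ p ∈ G, m.factorization p + 1) :=
          Finset.sum_le_sum fun m hm => Nat.digits_length_le_of_le_pow hg
            (hbound m (by have := (Finset.mem_Icc.mp hm).1; omega))
      _ = t * ∑ m ∈ Finset.Icc 1 n, ∑ p ∈ G, m.factorization p + n := by
          rw [Finset.sum_add_distrib, ← Finset.mul_sum, Finset.sum_const, Nat.card_Icc,
            smul_eq_mul, mul_one, Nat.add_sub_cancel]
      _ ≤ t * (G.card * n) + n := by gcongr; exact Nat.sum_Icc_sum_factorization_le n G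
      _ = (t * G.card + 1) * n := by ring
  rw [← Nat.cast_sum]
  exact_mod_cast hnat
end
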